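/- arXiv:1006.5693 — 7 statements merged into one kernel-verified Lean document; each statement's English description precedes it below -/
import Mathlib

section
/- The α-Lüroth map L_α preserves Lebesgue measure: for every Borel set B ⊆ [0,1], λ(L_α^{-1}(B)) = λ(B). -/
/-!
On each interval `A_n = (t_{n+1}, t_n]` the map is the decreasing affine bijection
`x ↦ (t_n - x) / a_n` onto `[0, 1)`, so `A_n ∩ L⁻¹ B` is an affine preimage of `B ∩ [0, 1)`
and has measure `a_n · λ(B)`. The intervals partition `(0, 1]`, and summing over `n` gives
`(∑ a_n) · λ(B) = λ(B)`.
-/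

open MeasureTheory Set Filter Topology

section Branch

variable {c r : ℝ}

theorem preimage_Ico_zero_one_of_branch (hr : 0 < r) :
    (fun x => (c - x) / r) ⁻¹' Ico 0 1 = Ioc (c - r) c := by
  ext x
  simp only [mem_preimage, mem_Ico, mem_Ioc, div_nonneg_iff, div_lt_one hr]
  constructor
  · rintro ⟨(⟨hx, -⟩ | ⟨-, hr'⟩), hlt⟩
    · constructor <;> linarith
    · linarith
  · rintro ⟨hlt, hle⟩
    exact ⟨Or.inl ⟨by linarith, hr.le⟩, by linarith⟩

theorem volume_preimage_branch (hr : 0 < r) (s : Set ℝ) :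
    volume ((fun x => (c - x) / r) ⁻¹' s) = ENNReal.ofReal r * volume s := by
  have hf : (fun x => (c - x) / r) ⁻¹' s
      = (fun x => -r⁻¹ * x) ⁻¹' ((fun z => c / r + z) ⁻¹' s) := by
    ext x
    simp only [mem_preimage]
    ring_nf
  rw [hf, Real.volume_preimage_mul_left (by simp [hr.ne']), measure_preimage_add,
    inv_neg, inv_inv, abs_neg, abs_of_pos hr]

theorem Ioc_inter_preimage_eq_preimage_branch (hr : 0 < r) {L : ℝ → ℝ}
    (hL : EqOn L (fun x => (c - x) / r) (Ioc (c - r) c)) (B : Set ℝ) :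
    Ioc (c - r) c ∩ L ⁻¹' B = (fun x => (c - x) / r) ⁻¹' (Ico 0 1 ∩ B) := by
  rw [hL.inter_preimage_eq, preimage_inter, preimage_Ico_zero_one_of_branch hr]

end Branch

theorem Antitone.iUnion_Ioc_succ_eq_Ioc {α : Type*} [LinearOrder α] [TopologicalSpace α]
    [OrderTopology α] {s : ℕ → α} {a : α} (hs : Antitone s) (ha : Tendsto s atTop (𝓝 a)) :
    ⋃ n, Ioc (s (n + 1)) (s n) = Ioc a (s 0) := by
  apply subset_antisymm
  · exact iUnion_subset fun n => Ioc_subset_Ioc (hs.le_of_tendsto ha _) (hs n.zero_le)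
  rintro x ⟨hax, hxs⟩
  classical
  have hex : ∃ m, s m < x := (ha.eventually (gt_mem_nhds hax)).exists
  obtain ⟨m, hm⟩ : ∃ m, Nat.find hex = m + 1 :=
    Nat.exists_eq_succ_of_ne_zero fun h => (Nat.find_spec hex).not_ge (h ▸ hxs)
  refine mem_iUnion.2 ⟨m, ?_, not_lt.1 (Nat.find_min hex (by omega))⟩
  exact hm ▸ Nat.find_spec hex

theorem tsum_nat_add_eq_add_tsum_nat_add_succ {G : Type*} [AddCommGroup G] [TopologicalSpace G]
    [IsTopologicalAddGroup G] [T2Space G] {f : ℕ → G} (hf : Summable f) (n : ℕ) :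
    ∑' k, f (k + n) = f n + ∑' k, f (k + (n + 1)) := by
  rw [((summable_nat_add_iff n).2 hf).tsum_eq_zero_add]
  simp only [zero_add, add_right_comm _ 1, add_assoc]

theorem volume_Icc_inter_preimage_of_affine_branches {s b : ℕ → ℝ} {L : ℝ → ℝ}
    (hb_pos : ∀ n, 0 < b n) (hb : HasSum b 1) (hs0 : s 0 = 1)
    (hstep : ∀ n, s (n + 1) = s n - b n) (hs_lim : Tendsto s atTop (𝓝 0))
    (hL : ∀ n, EqOn L (fun x => (s n - x) / b n) (Ioc (s (n + 1)) (s n)))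
    {B : Set ℝ} (hB : MeasurableSet B) (hB01 : B ⊆ Icc 0 1) :
    volume (Icc 0 1 ∩ L ⁻¹' B) = volume B := by
  have hs : Antitone s := antitone_nat_of_succ_le fun n => by linarith [hstep n, hb_pos n]
  have hpiece (n : ℕ) : Ioc (s (n + 1)) (s n) ∩ L ⁻¹' B
      = (fun x => (s n - x) / b n) ⁻¹' (Ico 0 1 ∩ B) := by
    have hLn := hL n
    rw [hstep] at hLn ⊢
    exact Ioc_inter_preimage_eq_preimage_branch (hb_pos n) hLn B
  calc volume (Icc 0 1 ∩ L ⁻¹' B) = volume (Ioc 0 (s 0) ∩ L ⁻¹' B) := by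
        rw [hs0]
        exact measure_congr (Ioc_ae_eq_Icc.symm.inter (ae_eq_refl _))
    _ = ∑' n, ENNReal.ofReal (b n) * volume (Ico 0 1 ∩ B) := by
        rw [← hs.iUnion_Ioc_succ_eq_Ioc hs_lim, iUnion_inter, measure_iUnion]
        · simp only [hpiece, volume_preimage_branch (hb_pos _)]
        · exact hs.pairwise_disjoint_on_Ioc_succ.mono fun i j h =>
            h.mono inter_subset_left inter_subset_left
        · intro n
          rw [hpiece]
          exact (measurableSet_Ico.inter hB).preimage (by fun_prop)
    _ = volume (Icc 0 1 ∩ B) := by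
        rw [ENNReal.tsum_mul_right, ← ENNReal.ofReal_tsum_of_nonneg (fun n => (hb_pos n).le)
          hb.summable, hb.tsum_eq, ENNReal.ofReal_one, one_mul]
        exact measure_congr (Ico_ae_eq_Icc.inter (ae_eq_refl B))
    _ = volume B := by rw [inter_eq_right.2 hB01]

theorem stmt4_general (a t : ℕ → ℝ) (L : ℝ → ℝ)
    (hpos : ∀ n ≥ 1, 0 < a n)
    (hsum : ∑' n, a (n + 1) = 1)
    (ht : ∀ n, t n = ∑' k, a (n + k))
    (hL : ∀ n ≥ 1, ∀ x ∈ Set.Ioc (t (n + 1)) (t n), L x = (t n - x) / a n) :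
    ∀ B : Set ℝ, MeasurableSet B → B ⊆ Set.Icc 0 1 →
      MeasureTheory.volume (Set.Icc (0 : ℝ) 1 ∩ L ⁻¹' B) = MeasureTheory.volume B := by
  intro B hB hB01
  set b : ℕ → ℝ := fun n => a (n + 1)
  have hb : Summable b := by_contra fun h => by simp [tsum_eq_zero_of_not_summable h] at hsum
  have hts (n : ℕ) : t (n + 1) = ∑' k, b (k + n) := by
    rw [ht]; exact tsum_congr fun k => by simp only [b]; ring_nf
  refine volume_Icc_inter_preimage_of_affine_branches (s := fun n => t (n + 1))
    (fun n => hpos (n + 1) n.succ_pos) (hsum ▸ hb.hasSum) (by simpa [hts] using hsum)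
    (fun n => ?_) ?_ (fun n => hL (n + 1) n.succ_pos) hB hB01
  · simp only [hts, tsum_nat_add_eq_add_tsum_nat_add_succ hb n]; ring
  · simpa only [hts] using tendsto_sum_nat_add b

/-- The α-Lüroth map preserves Lebesgue measure on `[0,1]`. -/
theorem stmt4 (a t : ℕ → ℝ) (L : ℝ → ℝ)
    (hpos : ∀ n ≥ 1, 0 < a n)
    (hsummable : Summable (fun n => a (n + 1)))
    (hsum : ∑' n, a (n + 1) = 1)
    (ht : ∀ n, t n = ∑' k, a (n + k))
    (hL0 : L 0 = 0)
    (hL : ∀ n ≥ 1, ∀ x ∈ Set.Ioc (t (n + 1)) (t n), L x = (t n - x) / a n) :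
    ∀ B : Set ℝ, MeasurableSet B → B ⊆ Set.Icc 0 1 →
      MeasureTheory.volume (Set.Icc (0 : ℝ) 1 ∩ L ⁻¹' B) = MeasureTheory.volume B :=
  stmt4_general a t L hpos hsum ht hL
end

section
/- The α-Lüroth map is exact with respect to Lebesgue measure: for every Borel set B belonging to ⋂_{n∈ℕ} L_α^{-n}(𝓑), either λ(B) = 0 or λ([0,1] \ B) = 0. -/
/-!
For every `k` we have `B = [0,1] ∩ L^{-k} C_k`, and `L^k` maps each cylinder of rank `k` affinely
onto `[0,1)`; so `B` meets such a cylinder in the proportion `λ([0,1] ∩ C_k)`, which is `λ(B)`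
because `L` preserves `λ`. Since the `a n` are bounded by some `c < 1`, cylinders of rank `k` have
diameter at most `c^k`, so off the countable set of points whose orbit hits `0` they generate the
Borel sets of `[0,1]`. Hence the finite measures `λ|_B` and `λ(B) • λ|_[0,1]` agree, and
evaluating them at `[0,1] \ B` gives `λ(B) · λ([0,1] \ B) = 0`.
-/

open MeasureTheory Set Filter Topology Function

theorem volume_preimage_sub_div (d : ℝ) {c : ℝ} (hc : 0 < c) (S : Set ℝ) :
    volume ((fun x => (d - x) / c) ⁻¹' S) = ENNReal.ofReal c * volume S := by
  have hcomp : (fun x : ℝ => (d - x) / c) = (· * c⁻¹) ∘ (- ·) ∘ (-d + ·) := by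
    funext x; simp only [comp_apply]; ring
  rw [hcomp, preimage_comp, preimage_comp, measure_preimage_add,
    show (- ·) ⁻¹' ((· * c⁻¹) ⁻¹' S) = -((· * c⁻¹) ⁻¹' S) from rfl, Measure.measure_neg,
    Real.volume_preimage_mul_right (inv_ne_zero hc.ne'), inv_inv, abs_of_pos hc]

/-- Indexed from `0`: `a n` and `Ioc (t (n + 1)) (t n)` are the paper's `a_{n+1}` and `A_{n+1}`. -/
structure IsLurothPartition (a t : ℕ → ℝ) : Prop where
  pos : ∀ n, 0 < a n
  hasSum : HasSum a 1
  tail_eq : ∀ n, t n = ∑' k, a (n + k)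

structure IsLurothMap (a t : ℕ → ℝ) (L : ℝ → ℝ) : Prop where
  map_zero : L 0 = 0
  eq_on_Ioc : ∀ n, ∀ x ∈ Ioc (t (n + 1)) (t n), L x = (t n - x) / a n

section

variable {a t : ℕ → ℝ} {L : ℝ → ℝ}

namespace IsLurothPartition

theorem t_zero (h : IsLurothPartition a t) : t 0 = 1 := by
  simpa [h.tail_eq] using h.hasSum.tsum_eq

theorem t_eq_add (h : IsLurothPartition a t) (n : ℕ) : t n = a n + t (n + 1) := by
  have hs : Summable fun k => a (n + k) := by
    simpa [add_comm] using (summable_nat_add_iff n).2 h.hasSum.summable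
  rw [h.tail_eq, h.tail_eq, hs.tsum_eq_zero_add]
  simp [add_assoc, add_comm 1]

theorem antitone (h : IsLurothPartition a t) : Antitone t :=
  antitone_nat_of_succ_le fun n => by linarith [h.t_eq_add n, h.pos n]

theorem nonneg (h : IsLurothPartition a t) (n : ℕ) : 0 ≤ t n := by
  rw [h.tail_eq]
  exact tsum_nonneg fun k => (h.pos _).le

theorem le_one (h : IsLurothPartition a t) (n : ℕ) : t n ≤ 1 :=
  h.t_zero ▸ h.antitone n.zero_le

theorem tendsto_zero (h : IsLurothPartition a t) : Tendsto t atTop (𝓝 0) := by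
  convert tendsto_sum_nat_add a using 2 with n
  rw [h.tail_eq]
  simp only [add_comm]

theorem Ioc_subset_Icc (h : IsLurothPartition a t) (n : ℕ) :
    Ioc (t (n + 1)) (t n) ⊆ Icc 0 1 :=
  Ioc_subset_Icc_self.trans (Icc_subset_Icc (h.nonneg _) (h.le_one _))

theorem pairwise_disjoint_Ioc (h : IsLurothPartition a t) :
    Pairwise (Disjoint on fun n => Ioc (t (n + 1)) (t n)) := by
  simpa using h.antitone.pairwise_disjoint_on_Ioc_succ

theorem iUnion_Ioc (h : IsLurothPartition a t) : ⋃ n, Ioc (t (n + 1)) (t n) = Ioc 0 1 := by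
  refine (iUnion_subset fun n => ?_).antisymm fun x hx => ?_
  · exact fun x hx => ⟨(h.nonneg _).trans_lt hx.1, hx.2.trans (h.le_one n)⟩
  classical
  have hex : ∃ n, t (n + 1) < x :=
    ((h.tendsto_zero.comp (tendsto_add_atTop_nat 1)).eventually_lt_const hx.1).exists
  refine mem_iUnion.2 ⟨Nat.find hex, Nat.find_spec hex, ?_⟩
  rcases hn : Nat.find hex with _ | m
  · exact h.t_zero ▸ hx.2
  · exact not_lt.1 (Nat.find_min hex (hn ▸ m.lt_succ_self))

theorem eq_zero_or_exists_mem_Ioc (h : IsLurothPartition a t) {x : ℝ} (hx : x ∈ Icc 0 1) :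
    x = 0 ∨ ∃ n, x ∈ Ioc (t (n + 1)) (t n) := by
  rcases hx.1.eq_or_lt with rfl | hx0
  · exact Or.inl rfl
  · exact Or.inr (mem_iUnion.1 (h.iUnion_Ioc.symm ▸ ⟨hx0, hx.2⟩))

theorem exists_lt_one_forall_le (h : IsLurothPartition a t) : ∃ c < 1, ∀ n, a n ≤ c := by
  refine ⟨max (1 - a 0) (1 - a 1), max_lt (by linarith [h.pos 0]) (by linarith [h.pos 1]),
    fun n => ?_⟩
  have hpair : ∀ m ≠ n, a n + a m ≤ 1 := fun m hmn => by
    simpa [Finset.sum_pair hmn.symm] using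
      sum_le_hasSum {n, m} (fun i _ => (h.pos i).le) h.hasSum
  rcases eq_or_ne n 0 with rfl | hn
  · exact le_max_of_le_right (by linarith [hpair 1 one_ne_zero])
  · exact le_max_of_le_left (by linarith [hpair 0 hn.symm])

end IsLurothPartition

namespace IsLurothMap

theorem Ioc_inter_preimage (hL : IsLurothMap a t L) (h : IsLurothPartition a t) (n : ℕ)
    (T : Set ℝ) :
    Ioc (t (n + 1)) (t n) ∩ L ⁻¹' T = (fun x => (t n - x) / a n) ⁻¹' (T ∩ Ico 0 1) := by
  have ha := h.pos n
  have htn := h.t_eq_add n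
  ext x
  simp only [mem_inter_iff, mem_preimage, mem_Ico, le_div_iff₀ ha, div_lt_one ha, zero_mul]
  constructor
  · rintro ⟨hx, hT⟩
    rw [hL.eq_on_Ioc n x hx] at hT
    exact ⟨hT, by linarith [hx.2], by linarith [hx.1]⟩
  · rintro ⟨hT, h0, h1⟩
    have hx : x ∈ Ioc (t (n + 1)) (t n) := ⟨by linarith, by linarith⟩
    exact ⟨hx, by rwa [hL.eq_on_Ioc n x hx]⟩

theorem volume_Ioc_inter_preimage (hL : IsLurothMap a t L) (h : IsLurothPartition a t)
    (n : ℕ) (T : Set ℝ) :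
    volume (Ioc (t (n + 1)) (t n) ∩ L ⁻¹' T) = ENNReal.ofReal (a n) * volume (Icc 0 1 ∩ T) := by
  rw [hL.Ioc_inter_preimage h, volume_preimage_sub_div _ (h.pos n), inter_comm,
    measure_congr (Ico_ae_eq_Icc.inter (ae_eq_refl T))]

theorem measurableSet_Ioc_inter_preimage (hL : IsLurothMap a t L) (h : IsLurothPartition a t)
    (n : ℕ) {T : Set ℝ} (hT : MeasurableSet T) :
    MeasurableSet (Ioc (t (n + 1)) (t n) ∩ L ⁻¹' T) := by
  rw [hL.Ioc_inter_preimage h]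
  exact (measurable_const.sub measurable_id).div_const _ (hT.inter measurableSet_Ico)

theorem mapsTo_Icc (hL : IsLurothMap a t L) (h : IsLurothPartition a t) :
    MapsTo L (Icc 0 1) (Icc 0 1) := by
  intro x hx
  rcases h.eq_zero_or_exists_mem_Ioc hx with rfl | ⟨n, hn⟩
  · simp [hL.map_zero]
  have ha := h.pos n
  rw [hL.eq_on_Ioc n x hn]
  exact ⟨div_nonneg (by linarith [hn.2]) ha.le,
    (div_le_one ha).2 (by linarith [hn.1, h.t_eq_add n])⟩

theorem Icc_inter_preimage_iterate_succ (hL : IsLurothMap a t L) (h : IsLurothPartition a t)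
    (k : ℕ) (S : Set ℝ) :
    Icc 0 1 ∩ L^[k + 1] ⁻¹' S = Icc 0 1 ∩ L ⁻¹' (Icc 0 1 ∩ L^[k] ⁻¹' S) := by
  rw [iterate_succ, preimage_comp, preimage_inter, ← inter_assoc,
    inter_eq_left.2 (hL.mapsTo_Icc h).subset_preimage]

theorem measurableSet_Icc_inter_preimage (hL : IsLurothMap a t L) (h : IsLurothPartition a t)
    {T : Set ℝ} (hT : MeasurableSet T) : MeasurableSet (Icc 0 1 ∩ L ⁻¹' T) := by
  rw [← Ioc_union_left zero_le_one, union_inter_distrib_right, ← h.iUnion_Ioc, iUnion_inter]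
  exact (MeasurableSet.iUnion fun n => hL.measurableSet_Ioc_inter_preimage h n hT).union
    (subsingleton_singleton.anti inter_subset_left).measurableSet

theorem volume_Icc_inter_preimage (hL : IsLurothMap a t L) (h : IsLurothPartition a t)
    {T : Set ℝ} (hT : MeasurableSet T) : volume (Icc 0 1 ∩ L ⁻¹' T) = volume (Icc 0 1 ∩ T) := by
  have hae : (Ioc 0 1 ∩ L ⁻¹' T : Set ℝ) =ᵐ[volume] (Icc 0 1 ∩ L ⁻¹' T : Set ℝ) :=
    Ioc_ae_eq_Icc.inter (ae_eq_refl _)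
  rw [← measure_congr hae, ← h.iUnion_Ioc, iUnion_inter,
    measure_iUnion (h.pairwise_disjoint_Ioc.mono fun _ _ => Disjoint.mono inter_subset_left
      inter_subset_left) fun n => hL.measurableSet_Ioc_inter_preimage h n hT]
  simp only [hL.volume_Ioc_inter_preimage h]
  rw [ENNReal.tsum_mul_right, ← ENNReal.ofReal_tsum_of_nonneg (fun n => (h.pos n).le)
    h.hasSum.summable, h.hasSum.tsum_eq, ENNReal.ofReal_one, one_mul]

theorem measurableSet_Icc_inter_preimage_iterate (hL : IsLurothMap a t L)
    (h : IsLurothPartition a t) {S : Set ℝ} (hS : MeasurableSet S) (k : ℕ) :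
    MeasurableSet (Icc 0 1 ∩ L^[k] ⁻¹' S) := by
  induction k with
  | zero => exact measurableSet_Icc.inter hS
  | succ k ih =>
    rw [hL.Icc_inter_preimage_iterate_succ h]
    exact hL.measurableSet_Icc_inter_preimage h ih

theorem volume_Icc_inter_preimage_iterate (hL : IsLurothMap a t L) (h : IsLurothPartition a t)
    {S : Set ℝ} (hS : MeasurableSet S) (k : ℕ) :
    volume (Icc 0 1 ∩ L^[k] ⁻¹' S) = volume (Icc 0 1 ∩ S) := by
  induction k with
  | zero => rfl
  | succ k ih =>
    rw [hL.Icc_inter_preimage_iterate_succ h, hL.volume_Icc_inter_preimage h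
      (hL.measurableSet_Icc_inter_preimage_iterate h hS k), ← inter_assoc, inter_self, ih]

theorem countable_Icc_inter_preimage (hL : IsLurothMap a t L) (h : IsLurothPartition a t)
    {T : Set ℝ} (hT : T.Countable) : (Icc 0 1 ∩ L ⁻¹' T).Countable := by
  refine ((countable_iUnion fun n => hT.image fun y => t n - a n * y).insert 0).mono ?_
  rintro x ⟨hx, hxT⟩
  rcases h.eq_zero_or_exists_mem_Ioc hx with rfl | ⟨n, hn⟩
  · exact mem_insert _ _
  refine mem_insert_of_mem _ (mem_iUnion.2 ⟨n, L x, hxT, ?_⟩)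
  rw [hL.eq_on_Ioc n x hn]
  field_simp [(h.pos n).ne']
  ring

theorem countable_Icc_inter_iUnion_preimage_iterate_zero (hL : IsLurothMap a t L)
    (h : IsLurothPartition a t) : (Icc 0 1 ∩ ⋃ j, L^[j] ⁻¹' {0}).Countable := by
  rw [inter_iUnion]
  refine countable_iUnion fun k => ?_
  induction k with
  | zero => exact (countable_singleton 0).mono inter_subset_right
  | succ k ih =>
    rw [hL.Icc_inter_preimage_iterate_succ h]
    exact hL.countable_Icc_inter_preimage h ih

end IsLurothMap

def lurothCylinder (t : ℕ → ℝ) (L : ℝ → ℝ) : List ℕ → Set ℝ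
  | [] => Icc 0 1
  | n :: w => Ioc (t (n + 1)) (t n) ∩ L ⁻¹' lurothCylinder t L w

theorem IsLurothPartition.lurothCylinder_subset_Icc (h : IsLurothPartition a t) :
    ∀ w, lurothCylinder t L w ⊆ Icc 0 1
  | [] => subset_rfl
  | n :: _ => inter_subset_left.trans (h.Ioc_subset_Icc n)

theorem IsLurothPartition.lurothCylinder_inter (h : IsLurothPartition a t) :
    ∀ w u, lurothCylinder t L w ∩ lurothCylinder t L u = ∅ ∨
      ∃ v, lurothCylinder t L w ∩ lurothCylinder t L u = lurothCylinder t L v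
  | [], u => Or.inr ⟨u, inter_eq_right.2 (h.lurothCylinder_subset_Icc u)⟩
  | w, [] => Or.inr ⟨w, inter_eq_left.2 (h.lurothCylinder_subset_Icc w)⟩
  | n :: w, m :: u => by
    simp only [lurothCylinder]
    rcases eq_or_ne n m with rfl | hnm
    · rw [inter_inter_inter_comm, inter_self, ← preimage_inter]
      rcases h.lurothCylinder_inter w u with he | ⟨v, hv⟩
      · exact Or.inl (by rw [he, preimage_empty, inter_empty])
      · exact Or.inr ⟨n :: v, by rw [hv]; rfl⟩
    · exact Or.inl ((h.pairwise_disjoint_Ioc hnm).mono inter_subset_left inter_subset_left).eq_bot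

namespace IsLurothMap

theorem measurableSet_lurothCylinder (hL : IsLurothMap a t L) (h : IsLurothPartition a t) :
    ∀ w, MeasurableSet (lurothCylinder t L w)
  | [] => measurableSet_Icc
  | n :: w => hL.measurableSet_Ioc_inter_preimage h n (hL.measurableSet_lurothCylinder h w)

theorem volume_lurothCylinder_inter_preimage_iterate (hL : IsLurothMap a t L)
    (h : IsLurothPartition a t) (w : List ℕ) (S : Set ℝ) :
    volume (lurothCylinder t L w ∩ L^[w.length] ⁻¹' S) =
      volume (lurothCylinder t L w) * volume (Icc 0 1 ∩ S) := by
  induction w with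
  | nil => simp [lurothCylinder]
  | cons n w ih =>
    have hcyl := h.lurothCylinder_subset_Icc (L := L) w
    rw [List.length_cons, iterate_succ, preimage_comp, lurothCylinder, inter_assoc,
      ← preimage_inter, hL.volume_Ioc_inter_preimage h, hL.volume_Ioc_inter_preimage h,
      ← inter_assoc, inter_eq_right.2 hcyl, ih, mul_assoc]

theorem abs_sub_le_of_mem_lurothCylinder (hL : IsLurothMap a t L) (h : IsLurothPartition a t)
    {c : ℝ} (hc : ∀ n, a n ≤ c) :
    ∀ w, ∀ y ∈ lurothCylinder t L w, ∀ z ∈ lurothCylinder t L w, |y - z| ≤ c ^ w.length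
  | [], y, hy, z, hz => by
    rw [List.length_nil, pow_zero, abs_le]
    constructor <;> linarith [hy.1, hy.2, hz.1, hz.2]
  | n :: w, y, hy, z, hz => by
    have ha := h.pos n
    have hyz : y - z = a n * (L z - L y) := by
      rw [hL.eq_on_Ioc n y hy.1, hL.eq_on_Ioc n z hz.1]
      field_simp
      ring
    calc |y - z| = a n * |L y - L z| := by rw [hyz, abs_mul, abs_of_pos ha, abs_sub_comm]
      _ ≤ c * c ^ w.length := mul_le_mul (hc n)
          (hL.abs_sub_le_of_mem_lurothCylinder h hc w _ hy.2 _ hz.2) (abs_nonneg _)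
          (ha.le.trans (hc n))
      _ = c ^ (n :: w).length := by rw [List.length_cons, pow_succ']

theorem exists_mem_lurothCylinder (hL : IsLurothMap a t L) (h : IsLurothPartition a t) :
    ∀ k, ∀ x ∈ Icc 0 1, (∀ j, L^[j] x ≠ 0) →
      ∃ w : List ℕ, w.length = k ∧ x ∈ lurothCylinder t L w
  | 0, x, hx, _ => ⟨[], rfl, hx⟩
  | k + 1, x, hx, hx0 => by
    rcases h.eq_zero_or_exists_mem_Ioc hx with hx' | ⟨n, hn⟩
    · exact absurd hx' (hx0 0)
    obtain ⟨w, hw, hLx⟩ := hL.exists_mem_lurothCylinder h k (L x) (hL.mapsTo_Icc h hx)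
      fun j => by simpa only [← iterate_succ_apply] using hx0 (j + 1)
    exact ⟨n :: w, by rw [List.length_cons, hw], hn, hLx⟩

theorem exists_lurothCylinder_subset (hL : IsLurothMap a t L) (h : IsLurothPartition a t)
    {U : Set ℝ} (hU : IsOpen U) {x : ℝ} (hx : x ∈ U ∩ Icc 0 1) (hx0 : ∀ j, L^[j] x ≠ 0) :
    ∃ w, x ∈ lurothCylinder t L w ∧ lurothCylinder t L w ⊆ U := by
  obtain ⟨ε, hε, hball⟩ := Metric.isOpen_iff.1 hU x hx.1
  obtain ⟨c, hc1, hc⟩ := h.exists_lt_one_forall_le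
  obtain ⟨k, hk⟩ := exists_pow_lt_of_lt_one hε hc1
  obtain ⟨w, rfl, hxw⟩ := hL.exists_mem_lurothCylinder h k x hx.2 hx0
  refine ⟨w, hxw, fun y hy => hball ?_⟩
  rw [Metric.mem_ball, Real.dist_eq]
  exact (hL.abs_sub_le_of_mem_lurothCylinder h hc w y hy x hxw).trans_lt hk

end IsLurothMap

def lurothExceptionalSet (L : ℝ → ℝ) : Set ℝ := (Icc 0 1)ᶜ ∪ ⋃ j, L^[j] ⁻¹' {0}

/-- Points of `[0,1]` whose orbit hits `0` lie in no cylinder of large rank; the second family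
absorbs them, together with the complement of `[0,1]`. -/
def lurothGenerators (t : ℕ → ℝ) (L : ℝ → ℝ) : Set (Set ℝ) :=
  range (lurothCylinder t L) ∪ {S | MeasurableSet S ∧ S ⊆ lurothExceptionalSet L}

namespace IsLurothMap

theorem measure_lurothExceptionalSet (hL : IsLurothMap a t L) (h : IsLurothPartition a t)
    {μ : Measure ℝ} (hμ : μ ≪ volume) (hμI : μ (Icc 0 1)ᶜ = 0) :
    μ (lurothExceptionalSet L) = 0 := by
  refine measure_mono_null (fun x hx => ?_) (measure_union_null hμI
    (hμ ((hL.countable_Icc_inter_iUnion_preimage_iterate_zero h).measure_zero volume)))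
  by_cases hxI : x ∈ Icc 0 1
  · exact Or.inr ⟨hxI, hx.resolve_left (not_not.2 hxI)⟩
  · exact Or.inl hxI

theorem measurableSet_of_mem_lurothGenerators (hL : IsLurothMap a t L)
    (h : IsLurothPartition a t) {S : Set ℝ} (hS : S ∈ lurothGenerators t L) :
    MeasurableSet S := by
  rcases hS with ⟨w, rfl⟩ | hS
  · exact hL.measurableSet_lurothCylinder h w
  · exact hS.1

theorem isPiSystem_lurothGenerators (hL : IsLurothMap a t L) (h : IsLurothPartition a t) :
    IsPiSystem (lurothGenerators t L) := by
  intro S hS T hT hST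
  have hmeas := (hL.measurableSet_of_mem_lurothGenerators h hS).inter
    (hL.measurableSet_of_mem_lurothGenerators h hT)
  rcases hS with ⟨w, rfl⟩ | hS
  · rcases hT with ⟨u, rfl⟩ | hT
    · rcases h.lurothCylinder_inter w u with he | ⟨v, hv⟩
      · exact absurd he hST.ne_empty
      · exact Or.inl ⟨v, hv.symm⟩
    · exact Or.inr ⟨hmeas, inter_subset_right.trans hT.2⟩
  · exact Or.inr ⟨hmeas, inter_subset_left.trans hS.2⟩

theorem measurableSpace_eq_generateFrom_lurothGenerators (hL : IsLurothMap a t L) (h : IsLurothPartition a t) :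
    Real.measurableSpace = MeasurableSpace.generateFrom (lurothGenerators t L) := by
  refine le_antisymm ?_
    (MeasurableSpace.generateFrom_le fun S hS => hL.measurableSet_of_mem_lurothGenerators h hS)
  rw [BorelSpace.measurable_eq (α := ℝ)]
  refine MeasurableSpace.generateFrom_le fun U (hU : IsOpen U) => ?_
  set V := ⋃ (w) (_ : lurothCylinder t L w ⊆ U), lurothCylinder t L w
  have hVU : V ⊆ U := iUnion₂_subset fun _ hw => hw
  have hV : MeasurableSet[.generateFrom (lurothGenerators t L)] V :=
    .iUnion fun w => .iUnion fun _ => .basic _ (Or.inl ⟨w, rfl⟩)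
  have hUV : U \ V ⊆ lurothExceptionalSet L := by
    intro x hx
    by_contra hxE
    simp only [lurothExceptionalSet, mem_union, mem_compl_iff, not_or, not_not, mem_iUnion,
      mem_preimage, mem_singleton_iff, not_exists] at hxE
    obtain ⟨w, hxw, hwU⟩ := hL.exists_lurothCylinder_subset h hU ⟨hx.1, hxE.1⟩ hxE.2
    exact hx.2 (mem_iUnion₂.2 ⟨w, hwU, hxw⟩)
  rw [← union_sdiff_cancel hVU]
  exact hV.union (.basic _ (Or.inr ⟨hU.measurableSet.diff
    (MeasurableSet.iUnion fun w => .iUnion fun _ => hL.measurableSet_lurothCylinder h w), hUV⟩))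

theorem ext_of_lurothCylinder (hL : IsLurothMap a t L) (h : IsLurothPartition a t)
    {μ ν : Measure ℝ} [IsFiniteMeasure μ] (hμ : μ ≪ volume) (hν : ν ≪ volume)
    (hμI : μ (Icc 0 1)ᶜ = 0) (hνI : ν (Icc 0 1)ᶜ = 0)
    (hcyl : ∀ w, μ (lurothCylinder t L w) = ν (lurothCylinder t L w)) : μ = ν := by
  refine ext_of_generate_finite _ (hL.measurableSpace_eq_generateFrom_lurothGenerators h)
    (hL.isPiSystem_lurothGenerators h) ?_ ?_
  · rintro S (⟨w, rfl⟩ | hS)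
    · exact hcyl w
    · rw [measure_mono_null hS.2 (hL.measure_lurothExceptionalSet h hμ hμI),
        measure_mono_null hS.2 (hL.measure_lurothExceptionalSet h hν hνI)]
  · rw [← measure_add_measure_compl measurableSet_Icc,
      ← measure_add_measure_compl measurableSet_Icc, hμI, hνI]
    exact congrArg (· + 0) (hcyl [])

variable {B : Set ℝ}

theorem volume_lurothCylinder_inter (hL : IsLurothMap a t L) (h : IsLurothPartition a t)
    (hB : ∀ n, ∃ C, MeasurableSet C ∧ B = Icc 0 1 ∩ L^[n] ⁻¹' C) (w : List ℕ) :
    volume (lurothCylinder t L w ∩ B) = volume B * volume (lurothCylinder t L w) := by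
  obtain ⟨C, hC, rfl⟩ := hB w.length
  rw [← inter_assoc, inter_eq_left.2 (h.lurothCylinder_subset_Icc w),
    hL.volume_lurothCylinder_inter_preimage_iterate h,
    hL.volume_Icc_inter_preimage_iterate h hC, mul_comm]

theorem restrict_eq_smul_restrict_Icc (hL : IsLurothMap a t L) (h : IsLurothPartition a t)
    (hBmeas : MeasurableSet B) (hBsub : B ⊆ Icc 0 1)
    (hB : ∀ n, ∃ C, MeasurableSet C ∧ B = Icc 0 1 ∩ L^[n] ⁻¹' C) :
    volume.restrict B = volume B • volume.restrict (Icc 0 1) := by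
  have : IsFiniteMeasure (volume.restrict B) :=
    isFiniteMeasure_restrict.2 (ne_top_of_le_ne_top (by simp) (measure_mono hBsub))
  refine hL.ext_of_lurothCylinder h Measure.absolutelyContinuous_restrict
    (Measure.absolutelyContinuous_restrict.smul_left _) ?_ (by simp) fun w => ?_
  · rw [Measure.restrict_apply' hBmeas, (disjoint_compl_left_iff_subset.2 hBsub).inter_eq,
      measure_empty]
  · have hw := hL.measurableSet_lurothCylinder h w
    rw [Measure.restrict_apply hw, Measure.smul_apply, smul_eq_mul, Measure.restrict_apply hw,
      inter_eq_left.2 (h.lurothCylinder_subset_Icc w)]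
    exact hL.volume_lurothCylinder_inter h hB w

end IsLurothMap

end

/-- The α-Lüroth map is exact with respect to Lebesgue measure. -/
theorem stmt5 (a t : ℕ → ℝ) (L : ℝ → ℝ) (B : Set ℝ)
    (hpos : ∀ n ≥ 1, 0 < a n)
    (hsummable : Summable (fun n => a (n + 1)))
    (hsum : ∑' n, a (n + 1) = 1)
    (ht : ∀ n, t n = ∑' k, a (n + k))
    (hL0 : L 0 = 0)
    (hL : ∀ n ≥ 1, ∀ x ∈ Set.Ioc (t (n + 1)) (t n), L x = (t n - x) / a n)
    (hBmeas : MeasurableSet B)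
    (hBsub : B ⊆ Set.Icc 0 1)
    (hB : ∀ n : ℕ, ∃ C : Set ℝ, MeasurableSet C ∧
      B = Set.Icc (0 : ℝ) 1 ∩ (L^[n]) ⁻¹' C) :
    MeasureTheory.volume B = 0 ∨ MeasureTheory.volume (Set.Icc (0 : ℝ) 1 \ B) = 0 := by
  have h : IsLurothPartition (fun n => a (n + 1)) (fun n => t (n + 1)) :=
    ⟨fun n => hpos _ n.succ_pos, hsummable.hasSum_iff.2 hsum,
      fun n => by rw [ht]; simp only [add_right_comm]⟩
  have hT : IsLurothMap (fun n => a (n + 1)) (fun n => t (n + 1)) L :=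
    ⟨hL0, fun n => hL (n + 1) n.succ_pos⟩
  have hB' := congrArg (· (Icc 0 1 \ B)) (hT.restrict_eq_smul_restrict_Icc h hBmeas hBsub hB)
  simp only [Measure.restrict_apply' hBmeas, sdiff_inter_self, measure_empty, Measure.smul_apply,
    smul_eq_mul, Measure.restrict_apply' measurableSet_Icc, inter_eq_left.2 sdiff_subset] at hB'
  exact mul_eq_zero.1 hB'.symm
end

section
/- The jump transformation of the α-Farey map with respect to the atom A_1 coincides with the α-Lüroth map: for every x ∈ (0,1], if ρ(x) = inf{n ≥ 0 : F_α^n(x) ∈ A_1} + 1, then F_α^{ρ(x)}(x) = L_α(x). -/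
/-!
Write `A n = (t (n+1), t n]`. For `n ≥ 2` the Farey map sends `A n` affinely and increasingly
onto `A (n-1)`, and it preserves the Lüroth coordinate `(t n - y) / a n`, which is the relative
position of `y` in its atom measured from the right end. Hence a point `x ∈ A (N+1)` walks down
the atoms `A N, …, A 1`, reaching `A 1` for the first time after exactly `N` steps, with its
Lüroth coordinate unchanged; on `A 1` that coordinate is `(1 - y) / a 1 = F y`.
-/

open Filter Topology Set Function

section Tails

variable {a t : ℕ → ℝ}

lemma tail_eq_add_tail (hsummable : Summable fun n => a (n + 1))
    (ht : ∀ n, t n = ∑' k, a (n + k)) {n : ℕ} (hn : 1 ≤ n) :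
    t n = a n + t (n + 1) := by
  obtain ⟨m, rfl⟩ := Nat.exists_eq_add_of_le' hn
  have hsummable' : Summable fun k => a (m + 1 + k) :=
    ((summable_nat_add_iff m).2 hsummable).congr fun k => congrArg a (by omega)
  rw [ht, ht, hsummable'.tsum_eq_zero_add, add_zero]
  exact congrArg _ (tsum_congr fun k => congrArg a (by omega))

lemma tail_one_eq_one (hsum : ∑' n, a (n + 1) = 1) (ht : ∀ n, t n = ∑' k, a (n + k)) :
    t 1 = 1 := by
  simp only [ht, add_comm 1, hsum]

lemma tendsto_tail_zero (ht : ∀ n, t n = ∑' k, a (n + k)) :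
    Tendsto (fun n => t (n + 1)) atTop (𝓝 0) := by
  refine (tendsto_sum_nat_add fun k => a (k + 1)).congr fun n => ?_
  rw [ht]
  exact tsum_congr fun k => congrArg a (by omega)

lemma tail_le_of_le (hpos : ∀ n ≥ 1, 0 < a n) (htail : ∀ n ≥ 1, t n = a n + t (n + 1))
    {m n : ℕ} (hm : 1 ≤ m) (hmn : m ≤ n) : t n ≤ t m := by
  have hanti : Antitone fun k => t (k + m) := antitone_nat_of_succ_le fun k => by
    have := htail (k + m) (by omega)
    have := hpos (k + m) (by omega)
    simp only [add_right_comm k 1 m]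
    linarith
  simpa [Nat.sub_add_cancel hmn] using hanti (Nat.zero_le (n - m))

end Tails

lemma exists_mem_Ioc_succ_of_le_of_exists_lt {u : ℕ → ℝ} {x : ℝ} (h0 : x ≤ u 0)
    (h : ∃ n, u n < x) : ∃ n, x ∈ Ioc (u (n + 1)) (u n) := by
  classical
  obtain ⟨n, hn⟩ : ∃ n, Nat.find h = n + 1 :=
    Nat.exists_eq_succ_of_ne_zero fun h' => (Nat.find_spec h).not_ge (h' ▸ h0)
  exact ⟨n, hn ▸ Nat.find_spec h, not_lt.1 (Nat.find_min h (hn ▸ Nat.lt_succ_self n))⟩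

section Farey

variable {a t : ℕ → ℝ} {F : ℝ → ℝ}

lemma farey_mem_and_luroth_eq (hpos : ∀ n ≥ 1, 0 < a n)
    (htail : ∀ n ≥ 1, t n = a n + t (n + 1))
    (hFn : ∀ n ≥ 2, ∀ x ∈ Ioc (t (n + 1)) (t n), F x = a (n - 1) * (x - t (n + 1)) / a n + t n)
    {k : ℕ} (hk : 1 ≤ k) {y : ℝ} (hy : y ∈ Ioc (t (k + 2)) (t (k + 1))) :
    F y ∈ Ioc (t (k + 1)) (t k) ∧ (t k - F y) / a k = (t (k + 1) - y) / a (k + 1) := by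
  have hFy : F y = a k * (y - t (k + 2)) / a (k + 1) + t (k + 1) := by
    simpa using hFn (k + 1) (by omega) y hy
  have hak := hpos k hk
  have hak1 := hpos (k + 1) (by omega)
  have htk := htail k hk
  have htk1 := htail (k + 1) (by omega)
  obtain ⟨hy₁, hy₂⟩ := hy
  -- the offset `y - t (k + 2)` ranges over `(0, a (k + 1)]`
  have hoffset_pos : 0 < a k * (y - t (k + 2)) / a (k + 1) :=
    div_pos (mul_pos hak (by linarith)) hak1
  have hoffset_le : a k * (y - t (k + 2)) / a (k + 1) ≤ a k :=
    (div_le_iff₀ hak1).2 (by nlinarith)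
  refine ⟨⟨by linarith, by linarith⟩, ?_⟩
  rw [hFy]
  field_simp
  linear_combination a (k + 1) * htk - a k * htk1

lemma farey_iterate_mem_and_luroth_eq (hpos : ∀ n ≥ 1, 0 < a n)
    (htail : ∀ n ≥ 1, t n = a n + t (n + 1))
    (hFn : ∀ n ≥ 2, ∀ x ∈ Ioc (t (n + 1)) (t n), F x = a (n - 1) * (x - t (n + 1)) / a n + t n)
    {k : ℕ} (hk : 1 ≤ k) (j : ℕ) {y : ℝ} (hy : y ∈ Ioc (t (k + j + 1)) (t (k + j))) :
    F^[j] y ∈ Ioc (t (k + 1)) (t k) ∧ (t k - F^[j] y) / a k = (t (k + j) - y) / a (k + j) := by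
  induction j generalizing y with
  | zero => exact ⟨hy, rfl⟩
  | succ j ih =>
    obtain ⟨hFy, hluroth⟩ := farey_mem_and_luroth_eq hpos htail hFn (k := k + j) (by omega) hy
    obtain ⟨hmem, hluroth'⟩ := ih hFy
    exact ⟨hmem, hluroth'.trans hluroth⟩

lemma sInf_farey_hitting_time_eq (hpos : ∀ n ≥ 1, 0 < a n)
    (htail : ∀ n ≥ 1, t n = a n + t (n + 1))
    (hFn : ∀ n ≥ 2, ∀ x ∈ Ioc (t (n + 1)) (t n), F x = a (n - 1) * (x - t (n + 1)) / a n + t n)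
    {N : ℕ} {x : ℝ} (hx : x ∈ Ioc (t (N + 2)) (t (N + 1))) :
    sInf {n : ℕ | F^[n] x ∈ Ioc (t 2) (t 1)} = N := by
  have hwalk : ∀ i ≤ N, F^[i] x ∈ Ioc (t (N + 1 - i + 1)) (t (N + 1 - i)) := fun i hi =>
    (farey_iterate_mem_and_luroth_eq hpos htail hFn (k := N + 1 - i) (by omega) i
      (by rwa [Nat.sub_add_cancel (by omega)])).1
  refine IsLeast.csInf_eq ⟨by simpa using hwalk N le_rfl, fun i hi => not_lt.1 fun hiN => ?_⟩
  have := tail_le_of_le hpos htail (m := 2) (n := N + 1 - i) (by omega) (by omega)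
  exact (hi.1.trans_le (hwalk i hiN.le).2).not_ge this

end Farey

theorem stmt8_general (a t : ℕ → ℝ) (F L : ℝ → ℝ)
    (hpos : ∀ n ≥ 1, 0 < a n)
    (hsummable : Summable (fun n => a (n + 1)))
    (hsum : ∑' n, a (n + 1) = 1)
    (ht : ∀ n, t n = ∑' k, a (n + k))
    (hF1 : ∀ x ∈ Set.Ioc (t 2) (t 1), F x = (1 - x) / a 1)
    (hFn : ∀ n ≥ 2, ∀ x ∈ Set.Ioc (t (n + 1)) (t n),
      F x = a (n - 1) * (x - t (n + 1)) / a n + t n)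
    (hL : ∀ n ≥ 1, ∀ x ∈ Set.Ioc (t (n + 1)) (t n), L x = (t n - x) / a n) :
    ∀ x ∈ Set.Ioc (0 : ℝ) 1,
      {n : ℕ | F^[n] x ∈ Set.Ioc (t 2) (t 1)}.Nonempty ∧
      F^[sInf {n : ℕ | F^[n] x ∈ Set.Ioc (t 2) (t 1)} + 1] x = L x := by
  intro x hx
  have htail : ∀ n ≥ 1, t n = a n + t (n + 1) := fun n hn => tail_eq_add_tail hsummable ht hn
  have ht1 := tail_one_eq_one hsum ht
  obtain ⟨N, hN⟩ := exists_mem_Ioc_succ_of_le_of_exists_lt (u := fun n => t (n + 1))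
    (ht1 ▸ hx.2) ((tendsto_tail_zero ht).eventually_lt_const hx.1).exists
  obtain ⟨hA1, hluroth⟩ :=
    farey_iterate_mem_and_luroth_eq hpos htail hFn le_rfl N (by rwa [add_comm 1 N])
  rw [sInf_farey_hitting_time_eq hpos htail hFn hN, iterate_succ_apply', hF1 _ hA1, ← ht1,
    hluroth, add_comm 1 N, hL (N + 1) (by omega) x hN]
  exact ⟨⟨N, hA1⟩, rfl⟩

/-- The jump transformation of the α-Farey map with respect to `A₁` coincides with the
α-Lüroth map: the first-hitting time of `A₁` is finite and `F^[ρ(x)] x = L x`. -/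
theorem stmt8 (a t : ℕ → ℝ) (F L : ℝ → ℝ)
    (hpos : ∀ n ≥ 1, 0 < a n)
    (hsummable : Summable (fun n => a (n + 1)))
    (hsum : ∑' n, a (n + 1) = 1)
    (ht : ∀ n, t n = ∑' k, a (n + k))
    (hF0 : F 0 = 0)
    (hF1 : ∀ x ∈ Set.Ioc (t 2) (t 1), F x = (1 - x) / a 1)
    (hFn : ∀ n ≥ 2, ∀ x ∈ Set.Ioc (t (n + 1)) (t n),
      F x = a (n - 1) * (x - t (n + 1)) / a n + t n)
    (hL0 : L 0 = 0)
    (hL : ∀ n ≥ 1, ∀ x ∈ Set.Ioc (t (n + 1)) (t n), L x = (t n - x) / a n) :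
    ∀ x ∈ Set.Ioc (0 : ℝ) 1,
      {n : ℕ | F^[n] x ∈ Set.Ioc (t 2) (t 1)}.Nonempty ∧
      F^[sInf {n : ℕ | F^[n] x ∈ Set.Ioc (t 2) (t 1)} + 1] x = L x :=
  stmt8_general a t F L hpos hsummable hsum ht hF1 hFn hL
end

section
/- Every x ∈ (0,1] with infinite α-Lüroth expansion digits (ℓ_k)_{k≥1} (defined by L_α^{k−1}(x) ∈ A_{ℓ_k}) satisfies x = Σ_{n=1}^∞ (−1)^{n−1} (∏_{i<n} a_{ℓ_i}) t_{ℓ_n}, and the series on the right converges. -/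
/-!
Unwinding `L (L^[k] x) = (t_{ℓ_k} - L^[k] x) / a_{ℓ_k}` gives the exact identity
`x - Σ_{n<N} (-1)^n P_n t_{ℓ_n} = (-1)^N P_N L^[N] x` with `P_n = ∏_{i<n} a_{ℓ_i}`.
All digit lengths are bounded by a single `c < 1` (they tend to `0` and each is `< t 1 = 1`),
so `P_n ≤ c^n`, the series converges absolutely and the remainder tends to `0`.
-/

open Filter Topology Finset

theorem sub_sum_alternating_eq_of_recurrence {u b s : ℕ → ℝ}
    (h : ∀ k, u k = s k - b k * u (k + 1)) (N : ℕ) :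
    u 0 - ∑ n ∈ range N, (-1 : ℝ) ^ n * (∏ i ∈ range n, b i) * s n
      = (-1 : ℝ) ^ N * (∏ i ∈ range N, b i) * u N := by
  induction N with
  | zero => simp
  | succ N ih =>
    rw [sum_range_succ, prod_range_succ, pow_succ]
    linear_combination ih + (-1 : ℝ) ^ N * (∏ i ∈ range N, b i) * h N

theorem hasSum_alternating_of_recurrence {u b s : ℕ → ℝ} {c M : ℝ}
    (h : ∀ k, u k = s k - b k * u (k + 1)) (hc : c < 1)
    (hb : ∀ k, |b k| ≤ c) (hs : ∀ k, |s k| ≤ M) (hu : ∀ k, |u k| ≤ M) :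
    HasSum (fun n => (-1 : ℝ) ^ n * (∏ i ∈ range n, b i) * s n) (u 0) := by
  have hc0 : 0 ≤ c := (abs_nonneg _).trans (hb 0)
  have hprod : ∀ n, |∏ i ∈ range n, b i| ≤ c ^ n := fun n => by
    rw [abs_prod]
    simpa using prod_le_prod (s := range n) (fun i _ => abs_nonneg (b i)) (fun i _ => hb i)
  have hterm : ∀ n {v : ℝ}, |v| ≤ M → |(-1 : ℝ) ^ n * (∏ i ∈ range n, b i) * v| ≤ M * c ^ n :=
    fun n v hv => by
      rw [abs_mul, abs_mul, abs_pow, abs_neg, abs_one, one_pow, one_mul, mul_comm M]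
      exact mul_le_mul (hprod n) hv (abs_nonneg v) (pow_nonneg hc0 n)
  have hgeom : Tendsto (fun n => M * c ^ n) atTop (𝓝 0) := by
    simpa using (tendsto_pow_atTop_nhds_zero_of_lt_one hc0 hc).const_mul M
  refine (hasSum_iff_tendsto_nat_of_summable_norm ?_).mpr ?_
  · exact .of_nonneg_of_le (fun n => norm_nonneg _) (fun n => hterm n (hs n))
      ((summable_geometric_of_lt_one hc0 hc).mul_left M)
  · rw [tendsto_iff_norm_sub_tendsto_zero]
    refine squeeze_zero (fun n => norm_nonneg _) (fun n => ?_) hgeom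
    rw [Real.norm_eq_abs, abs_sub_comm, sub_sum_alternating_eq_of_recurrence h]
    exact hterm n (hu n)

theorem exists_lt_one_forall_le_of_tendsto_zero {f : ℕ → ℝ}
    (hf : Tendsto f atTop (𝓝 0)) (h1 : ∀ n, f n < 1) : ∃ c < 1, ∀ n, f n ≤ c := by
  obtain ⟨N, hN⟩ := eventually_atTop.mp (hf.eventually_lt_const one_half_pos)
  obtain ⟨m, -, hm⟩ := exists_max_image (range (N + 1)) f nonempty_range_add_one
  refine ⟨max (1 / 2) (f m), max_lt (by norm_num) (h1 m), fun n => ?_⟩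
  rcases lt_or_ge n (N + 1) with hn | hn
  · exact le_max_of_le_right (hm n (mem_range.mpr hn))
  · exact le_max_of_le_left (hN n (by omega)).le

section Tails

variable {a t : ℕ → ℝ}

theorem tail_eq_add_tail_succ (ha : Summable a) (ht : ∀ n, t n = ∑' k, a (n + k)) (n : ℕ) :
    t n = a n + t (n + 1) := by
  have : Summable fun k => a (n + k) :=
    ((summable_nat_add_iff n).mpr ha).congr fun k => by rw [add_comm]
  rw [ht, ht, this.tsum_eq_zero_add, add_zero]
  simp only [add_assoc, add_comm 1]

theorem tail_pos (ha : Summable a) (ht : ∀ n, t n = ∑' k, a (n + k))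
    (hpos : ∀ n ≥ 1, 0 < a n) {n : ℕ} (hn : 1 ≤ n) : 0 < t n := by
  rw [ht]
  exact (ha.comp_injective (add_right_injective n)).tsum_pos
    (fun k => (hpos _ (le_add_right hn)).le) 0 (by simpa using hpos n hn)

theorem tail_le_tail_one (ha : Summable a) (ht : ∀ n, t n = ∑' k, a (n + k))
    (hpos : ∀ n ≥ 1, 0 < a n) {n : ℕ} (hn : 1 ≤ n) : t n ≤ t 1 := by
  induction n, hn using Nat.le_induction with
  | base => rfl
  | succ n hn ih => linarith [tail_eq_add_tail_succ ha ht n, hpos n hn]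

theorem lt_tail_one (ha : Summable a) (ht : ∀ n, t n = ∑' k, a (n + k))
    (hpos : ∀ n ≥ 1, 0 < a n) {n : ℕ} (hn : 1 ≤ n) : a n < t 1 := by
  linarith [tail_eq_add_tail_succ ha ht n, tail_pos ha ht hpos (Nat.le_succ_of_le hn),
    tail_le_tail_one ha ht hpos hn]

end Tails

theorem stmt9_general (a t : ℕ → ℝ) (L : ℝ → ℝ) (x : ℝ) (ℓ : ℕ → ℕ)
    (hpos : ∀ n ≥ 1, 0 < a n)
    (hsummable : Summable (fun n => a (n + 1)))
    (hsum : ∑' n, a (n + 1) = 1)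
    (ht : ∀ n, t n = ∑' k, a (n + k))
    (hL : ∀ n ≥ 1, ∀ y ∈ Set.Ioc (t (n + 1)) (t n), L y = (t n - y) / a n)
    (hdig : ∀ k, 1 ≤ ℓ k ∧ L^[k] x ∈ Set.Ioc (t (ℓ k + 1)) (t (ℓ k))) :
    HasSum (fun n : ℕ => (-1 : ℝ) ^ n * (∏ i ∈ Finset.range n, a (ℓ i)) * t (ℓ n)) x := by
  have ha : Summable a := (summable_nat_add_iff 1).mp hsummable
  have ht_one : t 1 = 1 := by rw [ht, ← hsum]; simp only [add_comm 1]
  obtain ⟨c, hc, hac⟩ := exists_lt_one_forall_le_of_tendsto_zero hsummable.tendsto_atTop_zero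
    fun n => ht_one ▸ lt_tail_one ha ht hpos n.succ_pos
  have hdigit_pos : ∀ k, 0 < a (ℓ k) := fun k => hpos _ (hdig k).1
  have habs_le_one : ∀ {n : ℕ} {y : ℝ}, 1 ≤ n → y ∈ Set.Ioc (t (n + 1)) (t n) → |y| ≤ 1 :=
    fun hn hy => abs_le.mpr ⟨by linarith [tail_pos ha ht hpos (Nat.le_succ_of_le hn), hy.1],
      by linarith [hy.2, tail_le_tail_one ha ht hpos hn]⟩
  refine hasSum_alternating_of_recurrence (u := fun k => L^[k] x) (M := 1) (fun k => ?_) hc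
    (fun k => ?_) (fun k => ?_) (fun k => habs_le_one (hdig k).1 (hdig k).2)
  · rw [Function.iterate_succ_apply', hL _ (hdig k).1 _ (hdig k).2]
    field_simp [(hdigit_pos k).ne']
    ring
  · rw [abs_of_pos (hdigit_pos k)]
    obtain ⟨m, hm⟩ := Nat.exists_eq_add_one.mpr (hdig k).1
    exact hm ▸ hac m
  · exact habs_le_one (hdig k).1
      ⟨by linarith [tail_eq_add_tail_succ ha ht (ℓ k), hdigit_pos k], le_rfl⟩

/-- Every α-irrational `x` with digit sequence `ℓ` is the sum of its alternating
α-Lüroth series. -/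
theorem stmt9 (a t : ℕ → ℝ) (L : ℝ → ℝ) (x : ℝ) (ℓ : ℕ → ℕ)
    (hpos : ∀ n ≥ 1, 0 < a n)
    (hsummable : Summable (fun n => a (n + 1)))
    (hsum : ∑' n, a (n + 1) = 1)
    (ht : ∀ n, t n = ∑' k, a (n + k))
    (hL0 : L 0 = 0)
    (hL : ∀ n ≥ 1, ∀ y ∈ Set.Ioc (t (n + 1)) (t n), L y = (t n - y) / a n)
    (hx : x ∈ Set.Ioc (0 : ℝ) 1)
    (hdig : ∀ k, 1 ≤ ℓ k ∧ L^[k] x ∈ Set.Ioc (t (ℓ k + 1)) (t (ℓ k))) :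
    HasSum (fun n : ℕ => (-1 : ℝ) ^ n * (∏ i ∈ Finset.range n, a (ℓ i)) * t (ℓ n)) x :=
  stmt9_general a t L x ℓ hpos hsummable hsum ht hL hdig
end

section
/- If α is of infinite type (Σ_{k} t_k = ∞), then the Lebesgue measures of the α-sum-level sets tend to zero: lim_{n→∞} λ(𝓛_n^{(α)}) = 0; if α is of finite type, then lim_{n→∞} λ(𝓛_n^{(α)}) = (Σ_{k=1}^∞ t_k)^{−1}. -/
/-!
The tails `r k = t (k + 1)` satisfy `∑_{m ≤ n} r m * w (n - m) = 1` for every `n`, a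
telescoping consequence of the renewal equation; in particular `0 ≤ w ≤ 1`. Since `a 1 > 0`,
the renewal equation `w (n + 2) = a 1 * w (n + 1) + ∑_{k ≤ n} a (k + 2) * w (n - k)` forces
`w n` to be close to `limsup w` whenever `w (n + 1)` is (late enough), because the other terms
contribute at most about `(1 - a 1) * limsup w`. Iterating, for each `K` there are arbitrarily
late `n` with `w (n - m)` close to `limsup w` for all `m ≤ K`, and the identity then gives
`limsup w * ∑_{m ≤ K} r m ≤ 1`. The same argument for `liminf w` gives `1 ≤ liminf w * ∑' r`
when `r` is summable. If `∑ r = ∞` the first bound forces `limsup w ≤ 0`; otherwise the two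
bounds squeeze `w` to `(∑' r)⁻¹`.
-/

open Filter Finset Topology

theorem eventually_sum_range_mul_lt {b v : ℕ → ℝ} {β B L ε : ℝ} (hb : ∀ k, 0 ≤ b k)
    (hβ : HasSum b β) (hB : ∀ n, v n ≤ B) (hL : ∀ᶠ n in atTop, v n ≤ L) (hε : 0 < ε) :
    ∀ᶠ n in atTop, ∑ k ∈ range (n + 1), b k * v (n - k) < β * L + ε := by
  obtain ⟨N, hN⟩ := eventually_atTop.1 hL
  set S : ℕ → ℝ := fun m => ∑ k ∈ range m, b k
  have hS : Tendsto S atTop (𝓝 β) := hβ.tendsto_sum_nat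
  have hS_head : Tendsto (fun n => S (n + 1 - N)) atTop (𝓝 β) :=
    hS.comp ((tendsto_sub_atTop_nat N).comp (tendsto_add_atTop_nat 1))
  have hbound : Tendsto (fun n => L * S (n + 1 - N) + B * (S (n + 1) - S (n + 1 - N))) atTop
      (𝓝 (β * L)) := by
    simpa [mul_comm] using
      (hS_head.const_mul L).add ((((tendsto_add_atTop_iff_nat 1).2 hS).sub hS_head).const_mul B)
  filter_upwards [hbound.eventually (gt_mem_nhds (lt_add_of_pos_right _ hε)),
    eventually_ge_atTop N] with n hlt hn
  refine lt_of_le_of_lt ?_ hlt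
  -- the terms with `n - k ≥ N` are bounded via `L`, the last `N` terms via `B`
  rw [← sum_range_add_sum_Ico _ (by omega : n + 1 - N ≤ n + 1), ← sum_Ico_eq_sub _ (by omega)]
  gcongr
  · calc ∑ k ∈ range (n + 1 - N), b k * v (n - k) ≤ ∑ k ∈ range (n + 1 - N), b k * L :=
          sum_le_sum fun k hk => mul_le_mul_of_nonneg_left
            (hN _ (by simp only [mem_range] at hk; omega)) (hb k)
      _ = L * S (n + 1 - N) := by rw [← sum_mul, mul_comm]
  · calc ∑ k ∈ Ico (n + 1 - N) (n + 1), b k * v (n - k)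
          ≤ ∑ k ∈ Ico (n + 1 - N) (n + 1), b k * B :=
        sum_le_sum fun k _ => mul_le_mul_of_nonneg_left (hB _) (hb k)
      _ = B * ∑ k ∈ Ico (n + 1 - N) (n + 1), b k := by rw [← sum_mul, mul_comm]

section LinearRecursion

variable {u b : ℕ → ℝ} {c B L : ℝ}

theorem exists_eventually_le_of_le_succ {ε : ℝ} (hc : 0 < c)
    (hb : ∀ k, 0 ≤ b k) (hbsum : HasSum b (1 - c))
    (hu : ∀ n, u (n + 2) = c * u (n + 1) + ∑ k ∈ range (n + 1), b k * u (n - k))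
    (hB : ∀ n, u n ≤ B) (hL : ∀ η > 0, ∀ᶠ n in atTop, u n < L + η) (hε : 0 < ε) :
    ∃ δ > 0, ∀ᶠ n in atTop, L - δ ≤ u (n + 1) → L - ε ≤ u n := by
  set η := c * ε / 4 with hη_def
  have hη : 0 < η := by positivity
  have hc1 : 0 ≤ 1 - c := hbsum.nonneg hb
  have hconv := eventually_sum_range_mul_lt hb hbsum hB ((hL η hη).mono fun _ h => h.le) hη
  refine ⟨η, hη, ?_⟩
  filter_upwards [(tendsto_sub_atTop_nat 1).eventually hconv, eventually_ge_atTop 1]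
    with n hn hn1 hnear
  obtain ⟨k, rfl⟩ : ∃ k, n = k + 1 := ⟨n - 1, by omega⟩
  rw [Nat.add_sub_cancel] at hn
  rw [show k + 1 + 1 = k + 2 from rfl, hu k] at hnear
  -- `c * u (k + 1) ≥ (L - η) - (1 - c) * (L + η) - η ≥ c * L - 3 * η` and `3 * η < c * ε`
  have : c * (L - ε) ≤ c * u (k + 1) := by nlinarith [mul_pos hc hη]
  exact le_of_mul_le_mul_left this hc

theorem frequently_forall_sub_le
    (hfreq : ∀ ε > 0, ∃ᶠ n in atTop, L - ε < u n)
    (hstep : ∀ ε > 0, ∃ δ > 0, ∀ᶠ n in atTop, L - δ ≤ u (n + 1) → L - ε ≤ u n) (M : ℕ) :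
    ∀ ε > 0, ∃ᶠ n in atTop, ∀ m ≤ M, L - ε ≤ u (n - m) := by
  induction M with
  | zero => intro ε hε; simpa using (hfreq ε hε).mono fun _ h => h.le
  | succ M ih =>
    intro ε hε
    obtain ⟨δ, hδ, hstepδ⟩ := hstep ε hε
    refine ((ih (min δ ε) (lt_min hδ hε)).and_eventually
      (((tendsto_sub_atTop_nat (M + 1)).eventually hstepδ).and
        (eventually_ge_atTop (M + 1)))).mono ?_
    rintro n ⟨hnear, hnext, hn⟩ m hm
    rcases Nat.lt_or_ge m (M + 1) with hm' | hm'
    · linarith [hnear m (by omega), min_le_right δ ε]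
    · obtain rfl : m = M + 1 := by omega
      apply hnext
      rw [show n - (M + 1) + 1 = n - M by omega]
      linarith [hnear M le_rfl, min_le_left δ ε]

theorem frequently_forall_sub_le_of_recursion (hc : 0 < c)
    (hb : ∀ k, 0 ≤ b k) (hbsum : HasSum b (1 - c))
    (hu : ∀ n, u (n + 2) = c * u (n + 1) + ∑ k ∈ range (n + 1), b k * u (n - k))
    (hB : ∀ n, u n ≤ B) (hL : ∀ ε > 0, ∀ᶠ n in atTop, u n < L + ε)
    (hfreq : ∀ ε > 0, ∃ᶠ n in atTop, L - ε < u n) (M : ℕ) :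
    ∀ ε > 0, ∃ᶠ n in atTop, ∀ m ≤ M, L - ε ≤ u (n - m) :=
  frequently_forall_sub_le hfreq
    (fun _ hε => exists_eventually_le_of_le_succ hc hb hbsum hu hB hL hε) M

end LinearRecursion

section Renewal

variable {a r w : ℕ → ℝ}

theorem sum_range_mul_eq_one (hw0 : w 0 = 1)
    (hw : ∀ n, w (n + 1) = ∑ k ∈ range (n + 1), a (k + 1) * w (n - k))
    (hr0 : r 0 = 1) (hr : ∀ k, r k = a (k + 1) + r (k + 1)) (n : ℕ) :
    ∑ m ∈ range (n + 1), r m * w (n - m) = 1 := by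
  induction n with
  | zero => simp [hw0, hr0]
  | succ n ih =>
    have hr' : ∀ k, r (k + 1) = r k - a (k + 1) := fun k => by linarith [hr k]
    rw [sum_range_succ', hr0]
    simp only [Nat.add_sub_add_right, Nat.sub_zero, hr', sub_mul, sum_sub_distrib, ih, ← hw]
    ring

theorem renewal_nonneg (ha : ∀ k, 0 ≤ a (k + 1)) (hw0 : w 0 = 1)
    (hw : ∀ n, w (n + 1) = ∑ k ∈ range (n + 1), a (k + 1) * w (n - k)) (n : ℕ) :
    0 ≤ w n := by
  induction n using Nat.strong_induction_on with
  | _ n ih =>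
    cases n with
    | zero => simp [hw0]
    | succ n => rw [hw]; exact sum_nonneg fun k _ => mul_nonneg (ha k) (ih _ (by omega))

theorem le_one_of_sum_range_mul_eq_one
    (hid : ∀ n, ∑ m ∈ range (n + 1), r m * w (n - m) = 1) (hr0 : r 0 = 1)
    (hr : ∀ k, 0 ≤ r k) (hw_nonneg : ∀ n, 0 ≤ w n) (n : ℕ) : w n ≤ 1 :=
  calc w n = r 0 * w (n - 0) := by simp [hr0]
    _ ≤ ∑ m ∈ range (n + 1), r m * w (n - m) :=
      single_le_sum (f := fun m => r m * w (n - m)) (fun m _ => mul_nonneg (hr m) (hw_nonneg _))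
        (mem_range.2 n.succ_pos)
    _ = 1 := hid n

theorem renewal_add_two
    (hw : ∀ n, w (n + 1) = ∑ k ∈ range (n + 1), a (k + 1) * w (n - k)) (n : ℕ) :
    w (n + 2) = a 1 * w (n + 1) + ∑ k ∈ range (n + 1), a (k + 2) * w (n - k) := by
  rw [hw, sum_range_succ', add_comm]
  simp [Nat.add_sub_add_right]

theorem frequently_forall_near_limsup_liminf (ha : ∀ k, 0 ≤ a (k + 1)) (ha1 : 0 < a 1)
    (hsum : HasSum (fun k => a (k + 1)) 1)
    (hw : ∀ n, w (n + 1) = ∑ k ∈ range (n + 1), a (k + 1) * w (n - k))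
    (hw_nonneg : ∀ n, 0 ≤ w n) (hw_le : ∀ n, w n ≤ 1) (K : ℕ) :
    (∀ ε > 0, ∃ᶠ n in atTop, ∀ m ≤ K, limsup w atTop - ε ≤ w (n - m)) ∧
      ∀ ε > 0, ∃ᶠ n in atTop, ∀ m ≤ K, w (n - m) ≤ liminf w atTop + ε := by
  have hb : HasSum (fun k => a (k + 2)) (1 - a 1) := by
    simpa using (hasSum_nat_add_iff' 1).2 hsum
  have hb0 : ∀ k, 0 ≤ a (k + 2) := fun k => ha (k + 1)
  have hbdd_above : IsBoundedUnder (· ≤ ·) atTop w := isBoundedUnder_of ⟨1, hw_le⟩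
  have hbdd_below : IsBoundedUnder (· ≥ ·) atTop w := isBoundedUnder_of ⟨0, hw_nonneg⟩
  refine ⟨frequently_forall_sub_le_of_recursion ha1 hb0 hb (renewal_add_two hw) hw_le
    (fun ε hε => eventually_lt_of_limsup_lt (by linarith) hbdd_above)
    (fun ε hε => frequently_lt_of_lt_limsup hbdd_below.isCoboundedUnder_le (by linarith)) K,
    fun ε hε => ?_⟩
  -- the same argument for `-w`, whose limsup is `-liminf w`
  have hneg := frequently_forall_sub_le_of_recursion (u := -w) (B := 0)
    (L := -liminf w atTop) ha1 hb0 hb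
    (fun n => by simp [renewal_add_two hw n, ← sum_neg_distrib]; ring)
    (fun n => by simpa using hw_nonneg n)
    (fun η hη => (eventually_lt_of_lt_liminf (b := liminf w atTop - η) (by linarith)
      hbdd_below).mono fun n h => by simp only [Pi.neg_apply]; linarith)
    (fun η hη => (frequently_lt_of_liminf_lt (b := liminf w atTop + η)
      hbdd_above.isCoboundedUnder_ge (by linarith)).mono
        fun n h => by simp only [Pi.neg_apply]; linarith) K ε hε
  exact hneg.mono fun n h m hm => by linarith [h m hm, show (-w) (n - m) = -w (n - m) from rfl]

theorem one_le_sum_range (hr0 : r 0 = 1) (hr : ∀ k, 0 ≤ r k) (K : ℕ) :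
    1 ≤ ∑ m ∈ range (K + 1), r m :=
  hr0 ▸ single_le_sum (fun m _ => hr m) (mem_range.2 K.succ_pos)

theorem mul_sum_range_le_one_of_frequently {L : ℝ}
    (hid : ∀ n, ∑ m ∈ range (n + 1), r m * w (n - m) = 1) (hr0 : r 0 = 1)
    (hr : ∀ k, 0 ≤ r k) (hw_nonneg : ∀ n, 0 ≤ w n) {K : ℕ}
    (hK : ∀ ε > 0, ∃ᶠ n in atTop, ∀ m ≤ K, L - ε ≤ w (n - m)) :
    L * ∑ m ∈ range (K + 1), r m ≤ 1 := by
  set R := ∑ m ∈ range (K + 1), r m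
  have hR : 0 < R := one_pos.trans_le (one_le_sum_range hr0 hr K)
  refine le_of_forall_sub_le fun ε hε => ?_
  obtain ⟨n, hnear, hn⟩ :=
    ((hK (ε / R) (by positivity)).and_eventually (eventually_ge_atTop K)).exists
  calc L * R - ε = ∑ m ∈ range (K + 1), r m * (L - ε / R) := by
        rw [← sum_mul]; field_simp; ring
    _ ≤ ∑ m ∈ range (K + 1), r m * w (n - m) := sum_le_sum fun m hm =>
        mul_le_mul_of_nonneg_left (hnear m (by simp only [mem_range] at hm; omega)) (hr m)
    _ ≤ ∑ m ∈ range (n + 1), r m * w (n - m) :=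
        sum_le_sum_of_subset_of_nonneg (range_subset_range.2 (by omega))
          fun m _ _ => mul_nonneg (hr m) (hw_nonneg _)
    _ = 1 := hid n

theorem one_le_mul_sum_range_add_of_frequently {l : ℝ}
    (hid : ∀ n, ∑ m ∈ range (n + 1), r m * w (n - m) = 1) (hr0 : r 0 = 1)
    (hr : ∀ k, 0 ≤ r k) (hw_le : ∀ n, w n ≤ 1) (hs : Summable r) {K : ℕ}
    (hK : ∀ ε > 0, ∃ᶠ n in atTop, ∀ m ≤ K, w (n - m) ≤ l + ε) :
    1 ≤ l * ∑ m ∈ range (K + 1), r m + (∑' k, r k - ∑ m ∈ range (K + 1), r m) := by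
  set R := ∑ m ∈ range (K + 1), r m
  have hR : 0 < R := one_pos.trans_le (one_le_sum_range hr0 hr K)
  refine le_of_forall_sub_le fun ε hε => ?_
  obtain ⟨n, hnear, hn⟩ :=
    ((hK (ε / R) (by positivity)).and_eventually (eventually_ge_atTop K)).exists
  have hhead : ∑ m ∈ range (K + 1), r m * w (n - m) ≤ l * R + ε :=
    calc ∑ m ∈ range (K + 1), r m * w (n - m) ≤ ∑ m ∈ range (K + 1), r m * (l + ε / R) :=
          sum_le_sum fun m hm =>
            mul_le_mul_of_nonneg_left (hnear m (by simp only [mem_range] at hm; omega)) (hr m)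
      _ = l * R + ε := by rw [← sum_mul]; field_simp; ring
  have htail : ∑ m ∈ Ico (K + 1) (n + 1), r m * w (n - m) ≤ ∑' k, r k - R :=
    calc ∑ m ∈ Ico (K + 1) (n + 1), r m * w (n - m) ≤ ∑ m ∈ Ico (K + 1) (n + 1), r m :=
          sum_le_sum fun m _ => mul_le_of_le_one_right (hr m) (hw_le _)
      _ = ∑ m ∈ range (n + 1), r m - R := sum_Ico_eq_sub _ (by omega)
      _ ≤ ∑' k, r k - R := by gcongr; exact hs.sum_le_tsum _ fun k _ => hr k
  have hsplit := sum_range_add_sum_Ico (fun m => r m * w (n - m)) (by omega : K + 1 ≤ n + 1)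
  rw [hid] at hsplit
  linarith

theorem nonpos_of_forall_mul_sum_range_le_one {L : ℝ} (hr : ∀ k, 0 ≤ r k)
    (hns : ¬ Summable r) (h : ∀ K, L * ∑ m ∈ range (K + 1), r m ≤ 1) : L ≤ 0 := by
  have htop : Tendsto (fun K => ∑ m ∈ range (K + 1), r m) atTop atTop :=
    ((not_summable_iff_tendsto_nat_atTop_of_nonneg hr).1 hns).comp (tendsto_add_atTop_nat 1)
  by_contra! hL
  obtain ⟨K, hK⟩ := (htop.eventually_gt_atTop (1 / L)).exists
  rw [div_lt_iff₀ hL] at hK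
  linarith [h K]

theorem tendsto_renewal (ha : ∀ k, 0 ≤ a (k + 1)) (ha1 : 0 < a 1)
    (hsum : HasSum (fun k => a (k + 1)) 1) (hr0 : r 0 = 1)
    (hr_succ : ∀ k, r k = a (k + 1) + r (k + 1)) (hr : ∀ k, 0 ≤ r k) (hw0 : w 0 = 1)
    (hw : ∀ n, w (n + 1) = ∑ k ∈ range (n + 1), a (k + 1) * w (n - k)) :
    (¬ Summable r → Tendsto w atTop (𝓝 0)) ∧
      (Summable r → Tendsto w atTop (𝓝 (1 / ∑' k, r k))) := by
  have hid := sum_range_mul_eq_one hw0 hw hr0 hr_succ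
  have hw_nonneg := renewal_nonneg ha hw0 hw
  have hw_le := le_one_of_sum_range_mul_eq_one hid hr0 hr hw_nonneg
  have hfreq := frequently_forall_near_limsup_liminf ha ha1 hsum hw hw_nonneg hw_le
  have hupper K : limsup w atTop * ∑ m ∈ range (K + 1), r m ≤ 1 :=
    mul_sum_range_le_one_of_frequently hid hr0 hr hw_nonneg (hfreq K).1
  have hbdd_above : IsBoundedUnder (· ≤ ·) atTop w := isBoundedUnder_of ⟨1, hw_le⟩
  have hbdd_below : IsBoundedUnder (· ≥ ·) atTop w := isBoundedUnder_of ⟨0, hw_nonneg⟩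
  refine ⟨fun hns => ?_, fun hs => ?_⟩
  · exact tendsto_of_le_liminf_of_limsup_le
      (le_liminf_of_le hbdd_above.isCoboundedUnder_ge (.of_forall hw_nonneg))
      (nonpos_of_forall_mul_sum_range_le_one hr hns hupper) hbdd_above hbdd_below
  have hS : Tendsto (fun K => ∑ m ∈ range (K + 1), r m) atTop (𝓝 (∑' k, r k)) :=
    hs.hasSum.tendsto_sum_nat.comp (tendsto_add_atTop_nat 1)
  have hR : 0 < ∑' k, r k := one_pos.trans_le (hr0 ▸ hs.le_tsum 0 fun k _ => hr k)
  have hlim : Tendsto (fun K => liminf w atTop * ∑ m ∈ range (K + 1), r m +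
      (∑' k, r k - ∑ m ∈ range (K + 1), r m)) atTop (𝓝 (liminf w atTop * ∑' k, r k)) := by
    simpa using
      (hS.const_mul (liminf w atTop)).add ((tendsto_const_nhds (x := ∑' k, r k)).sub hS)
  have hlower : 1 ≤ liminf w atTop * ∑' k, r k := ge_of_tendsto' hlim fun K =>
    one_le_mul_sum_range_add_of_frequently hid hr0 hr hw_le hs (hfreq K).2
  refine tendsto_of_le_liminf_of_limsup_le ?_ ?_ hbdd_above hbdd_below
  · rwa [div_le_iff₀ hR]
  · rw [le_div_iff₀ hR]
    exact le_of_tendsto' (hS.const_mul _) hupper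

end Renewal

/-- Erdős–Pollard–Feller renewal theorem for the α-sum-level sets: `λ(𝓛_n) → 0` when α is
of infinite type, and `λ(𝓛_n) → (Σ t_k)⁻¹` when α is of finite type. -/
theorem stmt11 (a t w : ℕ → ℝ)
    (hpos : ∀ n ≥ 1, 0 < a n)
    (hsummable : Summable (fun n => a (n + 1)))
    (hsum : ∑' n, a (n + 1) = 1)
    (ht : ∀ n, t n = ∑' k, a (n + k))
    (hw0 : w 0 = 1)
    (hw : ∀ n ≥ 1, w n = ∑ m ∈ Finset.Icc 1 n, a m * w (n - m)) :
    (¬ Summable (fun k => t (k + 1)) → Tendsto w atTop (nhds 0)) ∧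
    (Summable (fun k => t (k + 1)) →
      Tendsto w atTop (nhds (1 / ∑' k, t (k + 1)))) := by
  have htail : ∀ k, t (k + 1) = ∑' j, a (j + (k + 1)) := fun k => by
    rw [ht]; exact tsum_congr fun j => by rw [add_comm]
  have ha_summable : Summable a := (summable_nat_add_iff 1).1 hsummable
  refine tendsto_renewal (fun k => (hpos _ k.succ_pos).le) (hpos 1 le_rfl)
    (hsum ▸ hsummable.hasSum) ?_ (fun k => ?_) (fun k => ?_) hw0 (fun n => ?_)
  · simpa [htail] using hsum
  · rw [htail, htail, ((summable_nat_add_iff (k + 1)).2 ha_summable).tsum_eq_zero_add, zero_add]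
    congr 1
    exact tsum_congr fun j => by rw [show j + 1 + (k + 1) = j + (k + 1 + 1) by omega]
  · rw [htail]
    exact tsum_nonneg fun j => (hpos _ (by omega)).le
  · rw [hw _ n.succ_pos, ← Ico_add_one_right_eq_Icc, sum_Ico_eq_sum_range]
    simp [add_comm]
end

section
/- Let κ(n) = −n·log 2 / log a_n and κ₊ = inf_n κ(n). If κ₊ > 0, then the conjugating map θ_α (the distribution function of the measure of maximal entropy of F_α) is κ₊-Hölder continuous: there is c > 0 with |θ_α(x) − θ_α(y)| ≤ c|x − y|^{κ₊} for all x, y ∈ [0,1]. Moreover, if κ₊ = 0 then θ_α is not Hölder continuous of any positive exponent. -/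
/-!
On the `j`-th interval `A_j = (t (j + 1), t j]` the expansion of `θ` shifts under the Lüroth
map `L`, giving the self-similarity `θ x = 2⁻ʲ (2 - θ (L x))`; together with `θ 0 = 0` and the
bound `|θ| ≤ 2` read off the series, this forces `0 ≤ θ ≤ 1` and `θ (t j) = 2¹⁻ʲ`.

Put `r = 2 ^ (-1/κ₊)`, so that `κ₊ ≤ κ(n)` says `rⁿ ≤ aₙ` and `r ^ κ₊ = 1/2`. Points at distance
at most `rⁿ⁺¹` have `θ`-values within `2¹⁻ⁿ`: if both lie below `t (n + 1)` then `θ ≤ 2⁻ⁿ` there;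
if both lie in one `A_j` then `L` stretches their distance by `1/a_j ≤ r⁻ʲ`, and induction applies
at level `n - j`; if they straddle an endpoint `t (j + 1)`, the same stretching on either side of
it bounds each half. Choosing `n` with `rⁿ⁺¹ < |x - y| ≤ rⁿ` gives the `κ₊`-Hölder bound.

Conversely `θ (t n) - θ (t (n + 1)) = 2⁻ⁿ` across an interval of length `aₙ`, so an `s`-Hölder
bound with constant `c ≤ 2ᵐ` forces `κ(n) ≥ s / (m + 1)` for every `n`, hence `κ₊ > 0`.
-/

open Real Set Filter Topology

/-- The `n`-th interval is `A_n = (t (n + 1), t n]` for `n ≥ 1`; `a 0` and `t 0` play no role. -/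
structure IntervalPartition (a t : ℕ → ℝ) : Prop where
  pos : ∀ n ≥ 1, 0 < a n
  summable : Summable fun n => a (n + 1)
  tsum_eq_one : ∑' n, a (n + 1) = 1
  tail_eq : ∀ n, t n = ∑' k, a (n + k)

/-- The index `n` with `x ∈ A_n`; it is `0` (as `sInf ∅`) for `x ∉ (0, 1]`. -/
noncomputable def digit (t : ℕ → ℝ) (x : ℝ) : ℕ :=
  sInf {j | 1 ≤ j ∧ x ∈ Ioc (t (j + 1)) (t j)}

namespace IntervalPartition

variable {a t : ℕ → ℝ} (h : IntervalPartition a t)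
include h

theorem t_succ_eq (n : ℕ) : t (n + 1) = ∑' k, a (k + n + 1) := by
  rw [h.tail_eq]
  exact tsum_congr fun k => by ring_nf

theorem t_eq_add {n : ℕ} (hn : 1 ≤ n) : t n = a n + t (n + 1) := by
  obtain ⟨m, rfl⟩ := Nat.exists_eq_add_of_le' hn
  rw [h.t_succ_eq, h.t_succ_eq, ((summable_nat_add_iff m).2 h.summable).tsum_eq_zero_add]
  simp only [zero_add]
  exact congrArg _ (tsum_congr fun k => by ring_nf)

theorem t_one : t 1 = 1 := by
  rw [h.t_succ_eq, ← h.tsum_eq_one]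

theorem tendsto_t : Tendsto t atTop (𝓝 0) := by
  refine (tendsto_add_atTop_iff_nat 1).1 ?_
  simp_rw [h.t_succ_eq]
  simpa [add_assoc] using tendsto_sum_nat_add fun k => a (k + 1)

theorem t_nonneg {n : ℕ} (hn : 1 ≤ n) : 0 ≤ t n := by
  rw [h.tail_eq]
  exact tsum_nonneg fun k => (h.pos _ (by omega)).le

theorem t_pos {n : ℕ} (hn : 1 ≤ n) : 0 < t n := by
  rw [h.t_eq_add hn]
  linarith [h.pos n hn, h.t_nonneg (by omega : 1 ≤ n + 1)]

theorem a_lt_t {n : ℕ} (hn : 1 ≤ n) : a n < t n := by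
  rw [h.t_eq_add hn]
  linarith [h.t_pos (by omega : 1 ≤ n + 1)]

theorem t_succ_lt {n : ℕ} (hn : 1 ≤ n) : t (n + 1) < t n := by
  rw [h.t_eq_add hn]
  linarith [h.pos n hn]

theorem t_le_t {m n : ℕ} (hm : 1 ≤ m) (hmn : m ≤ n) : t n ≤ t m := by
  induction n, hmn using Nat.le_induction with
  | base => exact le_rfl
  | succ n hmn ih => exact (h.t_succ_lt (hm.trans hmn)).le.trans ih

theorem t_le_one {n : ℕ} (hn : 1 ≤ n) : t n ≤ 1 :=
  h.t_one ▸ h.t_le_t le_rfl hn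

theorem a_lt_one {n : ℕ} (hn : 1 ≤ n) : a n < 1 :=
  (h.a_lt_t hn).trans_le (h.t_le_one hn)

theorem exists_mem_Ioc {x : ℝ} (hx : x ∈ Ioc 0 1) : ∃ j, 1 ≤ j ∧ x ∈ Ioc (t (j + 1)) (t j) := by
  have hex : ∃ n, t (n + 1) < x :=
    ((h.tendsto_t.comp (tendsto_add_atTop_nat 1)).eventually (eventually_lt_nhds hx.1)).exists
  classical
  have hj : 1 ≤ Nat.find hex := by
    by_contra h0
    have := Nat.find_spec hex
    rw [show Nat.find hex = 0 by omega, h.t_one] at this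
    exact this.not_ge hx.2
  refine ⟨Nat.find hex, hj, Nat.find_spec hex, ?_⟩
  simpa [Nat.sub_add_cancel hj] using Nat.find_min hex (Nat.sub_one_lt_of_lt hj)

theorem eq_of_mem_Ioc {x : ℝ} {i j : ℕ} (hi : 1 ≤ i) (hj : 1 ≤ j)
    (hxi : x ∈ Ioc (t (i + 1)) (t i)) (hxj : x ∈ Ioc (t (j + 1)) (t j)) : i = j := by
  by_contra hne
  rcases Nat.lt_or_gt_of_ne hne with hlt | hlt
  · linarith [h.t_le_t (by omega : 1 ≤ i + 1) hlt, hxi.1, hxj.2]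
  · linarith [h.t_le_t (by omega : 1 ≤ j + 1) hlt, hxj.1, hxi.2]

theorem mem_Ioc_zero_one {x : ℝ} {j : ℕ} (hj : 1 ≤ j) (hx : x ∈ Ioc (t (j + 1)) (t j)) :
    x ∈ Ioc 0 1 :=
  ⟨(h.t_pos (by omega)).trans hx.1, hx.2.trans (h.t_le_one hj)⟩

theorem digit_spec {x : ℝ} (hx : x ∈ Ioc 0 1) :
    1 ≤ digit t x ∧ x ∈ Ioc (t (digit t x + 1)) (t (digit t x)) :=
  Nat.sInf_mem (h.exists_mem_Ioc hx)

theorem digit_eq {x : ℝ} {j : ℕ} (hj : 1 ≤ j) (hx : x ∈ Ioc (t (j + 1)) (t j)) :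
    digit t x = j := by
  have hx01 := h.mem_Ioc_zero_one hj hx
  exact h.eq_of_mem_Ioc (h.digit_spec hx01).1 hj (h.digit_spec hx01).2 hx

end IntervalPartition

noncomputable def thetaTerm (ℓ : ℕ → ℕ) (k : ℕ) : ℝ :=
  (-1 : ℝ) ^ (k + 1) * (2 : ℝ)⁻¹ ^ (∑ i ∈ Finset.range (k + 1), ℓ i)

noncomputable def thetaSum (m : ℕ) (ℓ : ℕ → ℕ) : ℝ :=
  -2 * ∑ k ∈ Finset.range m, thetaTerm ℓ k

noncomputable def thetaSeries (ℓ : ℕ → ℕ) : ℝ :=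
  -2 * ∑' k, thetaTerm ℓ k

theorem abs_two_mul_thetaTerm_le {ℓ : ℕ → ℕ} {k : ℕ} (hℓ : ∀ i ≤ k, 1 ≤ ℓ i) :
    |2 * thetaTerm ℓ k| ≤ (2 : ℝ)⁻¹ ^ k := by
  have hsum : k + 1 ≤ ∑ i ∈ Finset.range (k + 1), ℓ i := by
    simpa using Finset.card_nsmul_le_sum _ _ 1 fun i hi => hℓ i (Finset.mem_range_succ_iff.1 hi)
  rw [thetaTerm, abs_mul, abs_mul, abs_pow, abs_neg, abs_one, one_pow, one_mul,
    abs_of_pos (by positivity : (0 : ℝ) < 2⁻¹ ^ _), abs_two]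
  calc 2 * (2 : ℝ)⁻¹ ^ (∑ i ∈ Finset.range (k + 1), ℓ i) ≤ 2 * 2⁻¹ ^ (k + 1) := by
        gcongr 2 * ?_
        exact pow_le_pow_of_le_one (by norm_num) (by norm_num) hsum
    _ = 2⁻¹ ^ k := by ring

theorem summable_thetaTerm {ℓ : ℕ → ℕ} (hℓ : ∀ i, 1 ≤ ℓ i) : Summable (thetaTerm ℓ) := by
  refine (summable_mul_left_iff two_ne_zero).1 ?_
  exact (summable_geometric_of_lt_one (by norm_num) (by norm_num)).of_norm_bounded
    fun k => abs_two_mul_thetaTerm_le fun i _ => hℓ i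

theorem hasSum_inv_two_pow : HasSum (fun k : ℕ => (2 : ℝ)⁻¹ ^ k) 2 := by
  simpa only [one_div] using hasSum_geometric_two

theorem abs_thetaSeries_le {ℓ : ℕ → ℕ} (hℓ : ∀ i, 1 ≤ ℓ i) : |thetaSeries ℓ| ≤ 2 := by
  rw [thetaSeries, ← tsum_mul_left, ← Real.norm_eq_abs]
  refine tsum_of_norm_bounded hasSum_inv_two_pow fun k => ?_
  rw [Real.norm_eq_abs, neg_mul, abs_neg]
  exact abs_two_mul_thetaTerm_le fun i _ => hℓ i

theorem abs_thetaSum_le {m : ℕ} {ℓ : ℕ → ℕ} (hℓ : ∀ i < m, 1 ≤ ℓ i) : |thetaSum m ℓ| ≤ 2 := by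
  rw [thetaSum, Finset.mul_sum]
  refine (Finset.abs_sum_le_sum_abs _ _).trans ?_
  refine le_trans (Finset.sum_le_sum fun k hk => ?_)
    (sum_le_hasSum _ (fun k _ => by positivity) hasSum_inv_two_pow)
  rw [neg_mul, abs_neg]
  exact abs_two_mul_thetaTerm_le fun i hi => hℓ i (hi.trans_lt (Finset.mem_range.1 hk))

theorem thetaTerm_succ (ℓ : ℕ → ℕ) (k : ℕ) :
    thetaTerm ℓ (k + 1) = -((2 : ℝ)⁻¹ ^ ℓ 0 * thetaTerm (fun i => ℓ (i + 1)) k) := by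
  rw [thetaTerm, thetaTerm, Finset.sum_range_succ' _ (k + 1), pow_add]
  ring

theorem thetaSum_succ (m : ℕ) (ℓ : ℕ → ℕ) :
    thetaSum (m + 1) ℓ = (2 : ℝ)⁻¹ ^ ℓ 0 * (2 - thetaSum m fun i => ℓ (i + 1)) := by
  simp only [thetaSum, Finset.sum_range_succ', thetaTerm_succ, Finset.sum_neg_distrib,
    ← Finset.mul_sum]
  simp [thetaTerm]
  ring

theorem thetaSeries_eq {ℓ : ℕ → ℕ} (hℓ : ∀ i, 1 ≤ ℓ i) :
    thetaSeries ℓ = (2 : ℝ)⁻¹ ^ ℓ 0 * (2 - thetaSeries fun i => ℓ (i + 1)) := by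
  rw [thetaSeries, thetaSeries, (summable_thetaTerm hℓ).tsum_eq_zero_add]
  simp only [thetaTerm_succ, tsum_neg, tsum_mul_left]
  simp [thetaTerm]
  ring

noncomputable def lurothDigits (t : ℕ → ℝ) (L : ℝ → ℝ) (x : ℝ) (i : ℕ) : ℕ :=
  digit t (L^[i] x)

/-- The properties of `θ_α` that the Hölder estimates use: `θ` is bounded and self-similar under
the Lüroth map `L`. -/
structure IsThetaSolution (a t : ℕ → ℝ) (L θ : ℝ → ℝ) : Prop
    extends IntervalPartition a t where
  map_eq : ∀ n ≥ 1, ∀ y ∈ Ioc (t (n + 1)) (t n), L y = (t n - y) / a n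
  theta_zero : θ 0 = 0
  theta_eq : ∀ n ≥ 1, ∀ y ∈ Ioc (t (n + 1)) (t n), θ y = (2 : ℝ)⁻¹ ^ n * (2 - θ (L y))
  abs_theta_le : ∀ y ∈ Icc (0 : ℝ) 1, |θ y| ≤ 2

namespace IntervalPartition

variable {a t : ℕ → ℝ} {L θ : ℝ → ℝ} (hP : IntervalPartition a t)
  (hL : ∀ n ≥ 1, ∀ y ∈ Ioc (t (n + 1)) (t n), L y = (t n - y) / a n)
include hP hL

theorem map_mem_Ico {x : ℝ} {j : ℕ} (hj : 1 ≤ j) (hx : x ∈ Ioc (t (j + 1)) (t j)) :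
    L x ∈ Ico 0 1 := by
  have haj := hP.pos j hj
  have htj := hP.t_eq_add hj
  rw [hL j hj x hx, mem_Ico, div_lt_one haj]
  exact ⟨div_nonneg (by linarith [hx.2]) haj.le, by linarith [hx.1]⟩

theorem iterate_mem_Ioc {x : ℝ} (hx : x ∈ Ioc 0 1) {n : ℕ} (hne : ∀ i ≤ n, L^[i] x ≠ 0) :
    L^[n] x ∈ Ioc 0 1 := by
  induction n with
  | zero => exact hx
  | succ n ih =>
    obtain ⟨hj, hmem⟩ := hP.digit_spec (ih fun i hi => hne i (by omega))
    have hL01 := hP.map_mem_Ico hL hj hmem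
    rw [Function.iterate_succ_apply']
    have hne' := hne (n + 1) le_rfl
    rw [Function.iterate_succ_apply'] at hne'
    exact ⟨lt_of_le_of_ne hL01.1 hne'.symm, hL01.2.le⟩

theorem lurothDigits_spec {x : ℝ} (hx : x ∈ Ioc 0 1) {n : ℕ} (hne : ∀ i ≤ n, L^[i] x ≠ 0) :
    1 ≤ lurothDigits t L x n ∧
      L^[n] x ∈ Ioc (t (lurothDigits t L x n + 1)) (t (lurothDigits t L x n)) :=
  hP.digit_spec (hP.iterate_mem_Ioc hL hx hne)

variable (hθ0 : θ 0 = 0)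
  (hθinf : ∀ x ∈ Ioc (0 : ℝ) 1, ∀ ℓ : ℕ → ℕ,
    (∀ j, 1 ≤ ℓ j ∧ L^[j] x ∈ Ioc (t (ℓ j + 1)) (t (ℓ j))) → θ x = thetaSeries ℓ)
  (hθfin : ∀ x ∈ Ioc (0 : ℝ) 1, ∀ m : ℕ, ∀ ℓ : ℕ → ℕ,
    (∀ j < m, 1 ≤ ℓ j ∧ L^[j] x ∈ Ioc (t (ℓ j + 1)) (t (ℓ j))) →
    L^[m] x = 0 → θ x = thetaSum m ℓ)

include hθ0 hθfin in
theorem theta_eq_thetaSum {y : ℝ} (hy : y ∈ Icc 0 1) {m : ℕ} (hm : L^[m] y = 0)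
    (hne : ∀ i < m, L^[i] y ≠ 0) : θ y = thetaSum m (lurothDigits t L y) := by
  cases m with
  | zero => simp_all [thetaSum]
  | succ m =>
    have hy01 : y ∈ Ioc 0 1 := ⟨lt_of_le_of_ne hy.1 (hne 0 (by omega)).symm, hy.2⟩
    exact hθfin y hy01 (m + 1) _
      (fun j hj => hP.lurothDigits_spec hL hy01 fun i hi => hne i (by omega)) hm

include hθinf in
theorem theta_eq_thetaSeries {y : ℝ} (hy : y ∈ Ioc 0 1) (hne : ∀ i, L^[i] y ≠ 0) :
    θ y = thetaSeries (lurothDigits t L y) :=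
  hθinf y hy _ fun _ => hP.lurothDigits_spec hL hy fun i _ => hne i

include hθ0 hθinf hθfin in
theorem theta_eq_of_expansion {x : ℝ} {j : ℕ} (hj : 1 ≤ j) (hx : x ∈ Ioc (t (j + 1)) (t j)) :
    θ x = (2 : ℝ)⁻¹ ^ j * (2 - θ (L x)) := by
  have hx01 := hP.mem_Ioc_zero_one hj hx
  have hLx : L x ∈ Icc 0 1 := Ico_subset_Icc_self (hP.map_mem_Ico hL hj hx)
  have hdigit : lurothDigits t L x 0 = j := hP.digit_eq hj hx
  classical
  by_cases hfin : ∃ m, L^[m] x = 0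
  · obtain ⟨m, hm⟩ : ∃ m, Nat.find hfin = m + 1 :=
      Nat.exists_eq_succ_of_ne_zero fun h0 => hx01.1.ne' (by simpa [h0] using Nat.find_spec hfin)
    have hne : ∀ i < m + 1, L^[i] x ≠ 0 := fun i hi => Nat.find_min hfin (hm ▸ hi)
    have hzero : L^[m + 1] x = 0 := hm ▸ Nat.find_spec hfin
    rw [hP.theta_eq_thetaSum hL hθ0 hθfin (Ioc_subset_Icc_self hx01) hzero hne, thetaSum_succ,
      hdigit, hP.theta_eq_thetaSum hL hθ0 hθfin hLx (m := m) hzero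
        fun i hi => hne (i + 1) (by omega)]
    rfl
  · push Not at hfin
    have hLx01 : L x ∈ Ioc 0 1 := ⟨lt_of_le_of_ne hLx.1 (hfin 1).symm, hLx.2⟩
    rw [hP.theta_eq_thetaSeries hL hθinf hx01 hfin,
      thetaSeries_eq fun i => (hP.lurothDigits_spec hL hx01 fun k _ => hfin k).1, hdigit,
      hP.theta_eq_thetaSeries hL hθinf hLx01 fun i => hfin (i + 1)]
    rfl

include hθ0 hθinf hθfin in
theorem abs_theta_le_of_expansion {y : ℝ} (hy : y ∈ Icc 0 1) : |θ y| ≤ 2 := by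
  rcases hy.1.eq_or_lt with rfl | hy0
  · simp [hθ0]
  have hy01 : y ∈ Ioc 0 1 := ⟨hy0, hy.2⟩
  classical
  by_cases hfin : ∃ m, L^[m] y = 0
  · have hne : ∀ i < Nat.find hfin, L^[i] y ≠ 0 := fun i hi => Nat.find_min hfin hi
    rw [hP.theta_eq_thetaSum hL hθ0 hθfin hy (Nat.find_spec hfin) hne]
    exact abs_thetaSum_le fun i hi =>
      (hP.lurothDigits_spec hL hy01 fun k hk => hne k (by omega)).1
  · push Not at hfin
    rw [hP.theta_eq_thetaSeries hL hθinf hy01 hfin]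
    exact abs_thetaSeries_le fun i => (hP.lurothDigits_spec hL hy01 fun k _ => hfin k).1

include hθ0 hθinf hθfin in
theorem isThetaSolution : IsThetaSolution a t L θ :=
  ⟨hP, hL, hθ0, fun _ hj _ hx => hP.theta_eq_of_expansion hL hθ0 hθinf hθfin hj hx,
    fun _ hy => hP.abs_theta_le_of_expansion hL hθ0 hθinf hθfin hy⟩

end IntervalPartition

namespace IsThetaSolution

variable {a t : ℕ → ℝ} {L θ : ℝ → ℝ} (h : IsThetaSolution a t L θ)
include h

theorem map_mem_Icc {x : ℝ} {j : ℕ} (hj : 1 ≤ j) (hx : x ∈ Ioc (t (j + 1)) (t j)) :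
    L x ∈ Icc 0 1 :=
  Ico_subset_Icc_self (h.toIntervalPartition.map_mem_Ico h.map_eq hj hx)

theorem theta_nonneg {x : ℝ} (hx : x ∈ Icc 0 1) : 0 ≤ θ x := by
  rcases hx.1.eq_or_lt with rfl | hx0
  · exact h.theta_zero.ge
  obtain ⟨j, hj, hxj⟩ := h.exists_mem_Ioc ⟨hx0, hx.2⟩
  have := (abs_le.1 (h.abs_theta_le _ (h.map_mem_Icc hj hxj))).2
  rw [h.theta_eq j hj x hxj]
  exact mul_nonneg (by positivity) (by linarith)

theorem theta_le_one {x : ℝ} (hx : x ∈ Icc 0 1) : θ x ≤ 1 := by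
  rcases hx.1.eq_or_lt with rfl | hx0
  · exact h.theta_zero.trans_le zero_le_one
  obtain ⟨j, hj, hxj⟩ := h.exists_mem_Ioc ⟨hx0, hx.2⟩
  have := h.theta_nonneg (h.map_mem_Icc hj hxj)
  have hj2 : (2 : ℝ)⁻¹ ^ j ≤ 2⁻¹ := pow_le_of_le_one (by norm_num) (by norm_num) (by omega)
  rw [h.theta_eq j hj x hxj]
  nlinarith [mul_nonneg (pow_pos (by norm_num : (0 : ℝ) < 2⁻¹) j).le this]

theorem theta_t {j : ℕ} (hj : 1 ≤ j) : θ (t j) = 2 * (2 : ℝ)⁻¹ ^ j := by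
  have hmem : t j ∈ Ioc (t (j + 1)) (t j) := ⟨h.t_succ_lt hj, le_rfl⟩
  rw [h.theta_eq j hj _ hmem, h.map_eq j hj _ hmem, sub_self, zero_div, h.theta_zero]
  ring

theorem theta_le_of_le_t {x : ℝ} {m : ℕ} (hx0 : 0 ≤ x) (hx : x ≤ t (m + 1)) :
    θ x ≤ (2 : ℝ)⁻¹ ^ m := by
  rcases hx0.eq_or_lt with rfl | hx0
  · rw [h.theta_zero]
    positivity
  obtain ⟨j, hj, hxj⟩ := h.exists_mem_Ioc ⟨hx0, hx.trans (h.t_le_one (by omega))⟩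
  have hmj : m + 1 ≤ j := by
    by_contra hjm
    linarith [h.t_le_t (by omega : 1 ≤ j + 1) (by omega : j + 1 ≤ m + 1), hxj.1]
  have := h.theta_nonneg (h.map_mem_Icc hj hxj)
  have hpow : (2 : ℝ)⁻¹ ^ j ≤ 2⁻¹ ^ (m + 1) := pow_le_pow_of_le_one (by norm_num) (by norm_num) hmj
  rw [h.theta_eq j hj x hxj]
  calc (2 : ℝ)⁻¹ ^ j * (2 - θ (L x)) ≤ 2⁻¹ ^ (m + 1) * 2 := by
        nlinarith [mul_nonneg (pow_pos (by norm_num : (0 : ℝ) < 2⁻¹) j).le this]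
    _ = 2⁻¹ ^ m := by ring

theorem abs_theta_sub_le_of_le_t {x y : ℝ} {n : ℕ} (hx0 : 0 ≤ x) (hx : x ≤ t (n + 1))
    (hy0 : 0 ≤ y) (hy : y ≤ t (n + 1)) : |θ x - θ y| ≤ (2 : ℝ)⁻¹ ^ n := by
  have ht1 := h.t_le_one (n := n + 1) (by omega)
  have := h.theta_nonneg ⟨hx0, hx.trans ht1⟩
  have := h.theta_nonneg ⟨hy0, hy.trans ht1⟩
  have := h.theta_le_of_le_t hx0 hx
  have := h.theta_le_of_le_t hy0 hy
  rw [abs_sub_le_iff]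
  constructor <;> linarith

theorem one_sub_map_eq {x : ℝ} {j : ℕ} (hj : 1 ≤ j) (hx : x ∈ Ioc (t (j + 1)) (t j)) :
    1 - L x = (x - t (j + 1)) / a j := by
  have := h.pos j hj
  rw [h.map_eq j hj x hx, h.t_eq_add hj]
  field_simp
  ring

section HolderBound

-- `r` stands for `2 ^ (-1/κ₊)`: the hypothesis `r ^ n ≤ a n` is `κ₊ ≤ κ(n)`.
variable {r : ℝ} (hr0 : 0 < r) (hr : ∀ n ≥ 1, r ^ n ≤ a n)
include hr

theorem r_lt_one : r < 1 :=
  (pow_one r ▸ hr 1 le_rfl).trans_lt (h.a_lt_one le_rfl)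

theorem pow_le_t {k : ℕ} (hk : 1 ≤ k) : r ^ k ≤ t k :=
  (hr k hk).trans (h.a_lt_t hk).le

include hr0

theorem div_a_le_pow {d : ℝ} {j n : ℕ} (hj : 1 ≤ j) (hjn : j ≤ n) (hd : d ≤ r ^ (n + 1)) :
    d / a j ≤ r ^ (n - j + 1) := by
  rw [div_le_iff₀ (h.pos j hj)]
  calc d ≤ r ^ (n + 1) := hd
    _ = r ^ (n - j + 1) * r ^ j := by rw [← pow_add]; congr 1; omega
    _ ≤ r ^ (n - j + 1) * a j := by gcongr; exact hr j hj

theorem one_sub_theta_le {x : ℝ} {m : ℕ} (hx : x ≤ 1) (hd : 1 - x ≤ r ^ (m + 1)) :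
    1 - θ x ≤ (2 : ℝ)⁻¹ ^ m := by
  have hr1 := h.r_lt_one hr
  have hx0 : 0 < x := by linarith [pow_le_of_le_one hr0.le hr1.le (by omega : m + 1 ≠ 0)]
  cases m with
  | zero => linarith [h.theta_nonneg ⟨hx0.le, hx⟩]
  | succ m =>
    have ht2 : t 2 = 1 - a 1 := by linarith [h.t_eq_add le_rfl, h.t_one]
    have hx1 : x ∈ Ioc (t (1 + 1)) (t 1) := by
      refine ⟨?_, h.t_one ▸ hx⟩
      have : r ^ (m + 2) < r ^ 1 := pow_lt_pow_right_of_lt_one₀ hr0 hr1 (by omega)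
      linarith [hr 1 le_rfl]
    have hLx : L x ≤ r ^ (m + 1) := by
      have := h.div_a_le_pow hr0 hr le_rfl (by omega : 1 ≤ m + 1) hd
      simpa [h.map_eq 1 le_rfl x hx1, h.t_one] using this
    have hθLx := h.theta_le_of_le_t (h.map_mem_Icc le_rfl hx1).1
      (hLx.trans (h.pow_le_t hr (by omega)))
    rw [h.theta_eq 1 le_rfl x hx1, pow_one, pow_succ]
    linarith

theorem abs_theta_sub_theta_t_succ_le {y : ℝ} {j n : ℕ} (hj : 1 ≤ j) (hjn : j ≤ n)
    (hy : y ∈ Ioc (t (j + 1)) (t j)) (hd : y - t (j + 1) ≤ r ^ (n + 1)) :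
    |θ y - θ (t (j + 1))| ≤ (2 : ℝ)⁻¹ ^ n := by
  have hLy := h.map_mem_Icc hj hy
  have hC : 1 - θ (L y) ≤ 2⁻¹ ^ (n - j) := by
    refine h.one_sub_theta_le hr0 hr hLy.2 ?_
    rw [h.one_sub_map_eq hj hy]
    exact h.div_a_le_pow hr0 hr hj hjn hd
  have hdiff : θ y - θ (t (j + 1)) = 2⁻¹ ^ j * (1 - θ (L y)) := by
    rw [h.theta_eq j hj y hy, h.theta_t (by omega), pow_succ]
    ring
  rw [hdiff, abs_of_nonneg (mul_nonneg (by positivity) (by linarith [h.theta_le_one hLy])),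
    ← pow_mul_pow_sub (2 : ℝ)⁻¹ hjn]
  gcongr

theorem abs_theta_t_sub_le {x : ℝ} {k n : ℕ} (hk : 1 ≤ k) (hkn : k ≤ n + 1) (hx0 : 0 ≤ x)
    (hxk : x ≤ t k) (hd : t k - x ≤ r ^ (n + 1)) : |θ (t k) - θ x| ≤ (2 : ℝ)⁻¹ ^ n := by
  obtain rfl | hkn := hkn.eq_or_lt
  · exact h.abs_theta_sub_le_of_le_t (h.t_pos hk).le le_rfl hx0 hxk
  have hxk' : x ∈ Ioc (t (k + 1)) (t k) := by
    refine ⟨lt_of_not_ge fun hx => ?_, hxk⟩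
    have : r ^ (n + 1) < r ^ k := pow_lt_pow_right_of_lt_one₀ hr0 (h.r_lt_one hr) hkn
    linarith [h.t_eq_add hk, hr k hk]
  have hLx := h.map_mem_Icc hk hxk'
  have hB : θ (L x) ≤ 2⁻¹ ^ (n - k) := by
    refine h.theta_le_of_le_t hLx.1 ((?_ : L x ≤ r ^ (n - k + 1)).trans (h.pow_le_t hr (by omega)))
    rw [h.map_eq k hk x hxk']
    exact h.div_a_le_pow hr0 hr hk (by omega) hd
  have hdiff : θ (t k) - θ x = 2⁻¹ ^ k * θ (L x) := by
    rw [h.theta_eq k hk x hxk', h.theta_t hk]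
    ring
  rw [hdiff, abs_of_nonneg (mul_nonneg (by positivity) (h.theta_nonneg hLx)),
    ← pow_mul_pow_sub (2 : ℝ)⁻¹ (by omega : k ≤ n)]
  gcongr

theorem abs_theta_sub_le_of_sub_le_pow (n : ℕ) {x y : ℝ} (hx0 : 0 ≤ x) (hxy : x ≤ y)
    (hy1 : y ≤ 1) (hd : y - x ≤ r ^ (n + 1)) : |θ x - θ y| ≤ 2 * (2 : ℝ)⁻¹ ^ n := by
  induction n using Nat.strong_induction_on generalizing x y with
  | _ n ih =>
  by_cases hyt : y ≤ t (n + 1)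
  · have := h.abs_theta_sub_le_of_le_t hx0 (hxy.trans hyt) (hx0.trans hxy) hyt
    linarith [pow_pos (by norm_num : (0 : ℝ) < 2⁻¹) n]
  push Not at hyt
  obtain ⟨j, hj, hyj⟩ := h.exists_mem_Ioc ⟨(h.t_pos (by omega)).trans hyt, hy1⟩
  have hjn : j ≤ n := by
    by_contra hnj
    linarith [h.t_le_t (by omega : 1 ≤ n + 1) (by omega : n + 1 ≤ j), hyj.2]
  by_cases hxj : t (j + 1) < x
  · have hxj : x ∈ Ioc (t (j + 1)) (t j) := ⟨hxj, hxy.trans hyj.2⟩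
    have hLxy : L x - L y = (y - x) / a j := by
      rw [h.map_eq j hj x hxj, h.map_eq j hj y hyj]
      ring
    have hLyx : L y ≤ L x := by
      linarith [div_nonneg (sub_nonneg.2 hxy) (h.pos j hj).le]
    have hIH := ih (n - j) (by omega) (h.map_mem_Icc hj hyj).1 hLyx (h.map_mem_Icc hj hxj).2
      (hLxy ▸ h.div_a_le_pow hr0 hr hj hjn hd)
    have hdiff : θ x - θ y = 2⁻¹ ^ j * (θ (L y) - θ (L x)) := by
      rw [h.theta_eq j hj x hxj, h.theta_eq j hj y hyj]
      ring
    rw [hdiff, abs_mul, abs_of_pos (by positivity), ← pow_mul_pow_sub (2 : ℝ)⁻¹ hjn]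
    nlinarith [pow_pos (by norm_num : (0 : ℝ) < 2⁻¹) j]
  · push Not at hxj
    calc |θ x - θ y| ≤ |θ (t (j + 1)) - θ x| + |θ y - θ (t (j + 1))| := by
          rw [abs_sub_comm (θ (t (j + 1))) (θ x), abs_sub_comm (θ y)]
          exact abs_sub_le (θ x) (θ (t (j + 1))) (θ y)
      _ ≤ 2⁻¹ ^ n + 2⁻¹ ^ n :=
          add_le_add
            (h.abs_theta_t_sub_le hr0 hr (by omega) (by omega) hx0 hxj (by linarith [hyj.1]))
            (h.abs_theta_sub_theta_t_succ_le hr0 hr hj hjn hyj (by linarith))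
      _ = 2 * 2⁻¹ ^ n := by ring

theorem abs_theta_sub_le_rpow {κ : ℝ} (hκ : 0 < κ) (hrκ : r ^ κ = 2⁻¹) {x y : ℝ}
    (hx : x ∈ Icc 0 1) (hy : y ∈ Icc 0 1) : |θ x - θ y| ≤ 8 * |x - y| ^ κ := by
  wlog hxy : x ≤ y generalizing x y
  · rw [abs_sub_comm, abs_sub_comm x]
    exact this hy hx (le_of_not_ge hxy)
  rcases hxy.eq_or_lt with rfl | hlt
  · simp [Real.zero_rpow hκ.ne']
  have hd0 : 0 < y - x := sub_pos.2 hlt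
  obtain ⟨n, hn1, hn⟩ :=
    exists_nat_pow_near_of_lt_one hd0 (by linarith [hx.1, hy.2]) hr0 (h.r_lt_one hr)
  have hθ : |θ x - θ y| ≤ 4 * 2⁻¹ ^ n := by
    cases n with
    | zero =>
      have := h.theta_nonneg hx
      have := h.theta_nonneg hy
      have := h.theta_le_one hx
      have := h.theta_le_one hy
      rw [abs_sub_le_iff]
      constructor <;> norm_num <;> linarith
    | succ n =>
      have := h.abs_theta_sub_le_of_sub_le_pow hr0 hr n hx.1 hxy hy.2 hn
      rw [pow_succ]
      linarith
  have hpow : (2 : ℝ)⁻¹ ^ (n + 1) ≤ (y - x) ^ κ := by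
    rw [← hrκ, Real.rpow_pow_comm hr0.le]
    exact Real.rpow_le_rpow (by positivity) hn1.le hκ.le
  rw [abs_sub_comm x y, abs_of_pos hd0]
  calc |θ x - θ y| ≤ 4 * 2⁻¹ ^ n := hθ
    _ = 8 * 2⁻¹ ^ (n + 1) := by ring
    _ ≤ 8 * (y - x) ^ κ := by gcongr

end HolderBound

theorem inv_two_pow_le_mul_rpow {c s : ℝ}
    (hH : ∀ x ∈ Icc (0 : ℝ) 1, ∀ y ∈ Icc (0 : ℝ) 1, |θ x - θ y| ≤ c * |x - y| ^ s) {n : ℕ}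
    (hn : 1 ≤ n) : (2 : ℝ)⁻¹ ^ n ≤ c * a n ^ s := by
  have := hH (t (n + 1)) ⟨(h.t_pos (by omega)).le, h.t_le_one (by omega)⟩
    (t n) ⟨(h.t_pos hn).le, h.t_le_one hn⟩
  rwa [h.theta_t (by omega), h.theta_t hn, h.t_eq_add hn,
    show 2 * (2 : ℝ)⁻¹ ^ (n + 1) - 2 * 2⁻¹ ^ n = -2⁻¹ ^ n by ring,
    show t (n + 1) - (a n + t (n + 1)) = -a n by ring, abs_neg, abs_neg,
    abs_of_pos (by positivity), abs_of_pos (h.pos n hn)] at this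

end IsThetaSolution

theorem two_rpow_neg_inv_pow_le {a κ : ℝ} (ha0 : 0 < a) (ha1 : a < 1) (hκ : 0 < κ) {n : ℕ}
    (h : κ ≤ -(n * log 2) / log a) : ((2 : ℝ) ^ (-κ⁻¹)) ^ n ≤ a := by
  have hlog := Real.log_neg ha0 ha1
  rw [le_div_iff_of_neg hlog] at h
  rw [← Real.rpow_natCast, ← Real.rpow_mul zero_le_two, ← Real.exp_log ha0,
    Real.rpow_def_of_pos two_pos, Real.exp_le_exp,
    show log 2 * (-κ⁻¹ * n) = -(n * log 2) / κ by field_simp, div_le_iff₀ hκ]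
  linarith

theorem div_succ_le_neg_mul_log_two_div_log {a c s : ℝ} (ha0 : 0 < a) (ha1 : a < 1)
    {m n : ℕ} (hn : 1 ≤ n) (hcm : c ≤ 2 ^ m) (h : (2 : ℝ)⁻¹ ^ n ≤ c * a ^ s) :
    s / (m + 1) ≤ -(n * log 2) / log a := by
  have hlog := Real.log_neg ha0 ha1
  have hlog2 := Real.log_pos one_lt_two
  have hc : 0 < c := pos_of_mul_pos_left ((by positivity : (0:ℝ) < 2⁻¹ ^ n).trans_le h)
    (Real.rpow_pos_of_pos ha0 s).le
  have hlogs := Real.log_le_log (by positivity) h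
  rw [Real.log_mul hc.ne' (Real.rpow_pos_of_pos ha0 s).ne', Real.log_rpow ha0, Real.log_pow,
    Real.log_inv] at hlogs
  have hlogc : log c ≤ m * log 2 := by
    simpa [Real.log_pow] using Real.log_le_log hc hcm
  have hn' : (1 : ℝ) ≤ n := by exact_mod_cast hn
  rw [le_div_iff_of_neg hlog, div_mul_eq_mul_div, le_div_iff₀ (by positivity)]
  nlinarith [mul_nonneg (mul_nonneg (sub_nonneg.2 hn') (Nat.cast_nonneg m)) hlog2.le]

theorem IntervalPartition.bddBelow_range_kappa {a t : ℕ → ℝ} (h : IntervalPartition a t) :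
    BddBelow (range fun n : ℕ => -(((n : ℝ) + 1) * log 2) / log (a (n + 1))) := by
  refine ⟨0, ?_⟩
  rintro _ ⟨n, rfl⟩
  exact (div_pos_of_neg_of_neg (by nlinarith [Real.log_pos one_lt_two])
    (Real.log_neg (h.pos _ (by omega)) (h.a_lt_one (by omega)))).le

theorem stmt12_general (a t : ℕ → ℝ) (L θ : ℝ → ℝ) (κplus : ℝ)
    (hpos : ∀ n ≥ 1, 0 < a n)
    (hsummable : Summable (fun n => a (n + 1)))
    (hsum : ∑' n, a (n + 1) = 1)
    (ht : ∀ n, t n = ∑' k, a (n + k))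
    (hL : ∀ n ≥ 1, ∀ y ∈ Set.Ioc (t (n + 1)) (t n), L y = (t n - y) / a n)
    (hθ0 : θ 0 = 0)
    (hθinf : ∀ x ∈ Set.Ioc (0 : ℝ) 1, ∀ ℓ : ℕ → ℕ,
      (∀ j, 1 ≤ ℓ j ∧ L^[j] x ∈ Set.Ioc (t (ℓ j + 1)) (t (ℓ j))) →
      θ x = -2 * ∑' k : ℕ, (-1 : ℝ) ^ (k + 1) *
        ((2 : ℝ)⁻¹) ^ (∑ i ∈ Finset.range (k + 1), ℓ i))
    (hθfin : ∀ x ∈ Set.Ioc (0 : ℝ) 1, ∀ m : ℕ, ∀ ℓ : ℕ → ℕ,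
      (∀ j < m, 1 ≤ ℓ j ∧ L^[j] x ∈ Set.Ioc (t (ℓ j + 1)) (t (ℓ j))) →
      L^[m] x = 0 →
      θ x = -2 * ∑ k ∈ Finset.range m, (-1 : ℝ) ^ (k + 1) *
        ((2 : ℝ)⁻¹) ^ (∑ i ∈ Finset.range (k + 1), ℓ i))
    (hκ : κplus = ⨅ n : ℕ,
      (-(((n : ℝ) + 1) * Real.log 2) / Real.log (a (n + 1)))) :
    (0 < κplus → ∃ c > (0 : ℝ), ∀ x ∈ Set.Icc (0 : ℝ) 1, ∀ y ∈ Set.Icc (0 : ℝ) 1,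
      |θ x - θ y| ≤ c * |x - y| ^ κplus) ∧
    (κplus = 0 → ∀ s : ℝ, 0 < s →
      ¬ ∃ c > (0 : ℝ), ∀ x ∈ Set.Icc (0 : ℝ) 1, ∀ y ∈ Set.Icc (0 : ℝ) 1,
        |θ x - θ y| ≤ c * |x - y| ^ s) := by
  have h := (IntervalPartition.mk hpos hsummable hsum ht).isThetaSolution hL hθ0 hθinf hθfin
  have hcast (n : ℕ) : ((n + 1 : ℕ) : ℝ) = n + 1 := by push_cast; rfl
  constructor
  · intro hκpos
    have hr (n : ℕ) (hn : 1 ≤ n) : ((2 : ℝ) ^ (-κplus⁻¹)) ^ n ≤ a n := by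
      obtain ⟨n, rfl⟩ := Nat.exists_eq_add_of_le' hn
      refine two_rpow_neg_inv_pow_le (hpos _ hn) (h.a_lt_one hn) hκpos ?_
      rw [hcast, hκ]
      exact ciInf_le h.bddBelow_range_kappa n
    have hrκ : ((2 : ℝ) ^ (-κplus⁻¹)) ^ κplus = 2⁻¹ := by
      rw [← Real.rpow_mul zero_le_two, neg_mul, inv_mul_cancel₀ hκpos.ne', Real.rpow_neg_one]
    exact ⟨8, by norm_num, fun x hx y hy =>
      h.abs_theta_sub_le_rpow (by positivity) hr hκpos hrκ hx hy⟩
  · rintro hκ0 s hs ⟨c, -, hH⟩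
    obtain ⟨m, hm⟩ := pow_unbounded_of_one_lt c one_lt_two
    have hle : s / (m + 1) ≤ κplus := hκ ▸ le_ciInf fun n => by
      rw [← hcast n]
      exact div_succ_le_neg_mul_log_two_div_log (hpos _ (by omega)) (h.a_lt_one (by omega))
        (by omega) hm.le (h.inv_two_pow_le_mul_rpow hH (by omega))
    have : 0 < s / (m + 1) := by positivity
    linarith

/-- Hölder continuity of the conjugacy map `θ_α` with exponent `κ₊ = inf_n κ(n)`,
`κ(n) = -n log 2 / log a_n`; if `κ₊ = 0` then `θ_α` is Hölder of no positive exponent. -/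
theorem stmt12 (a t : ℕ → ℝ) (L θ : ℝ → ℝ) (κplus : ℝ)
    (hpos : ∀ n ≥ 1, 0 < a n)
    (hsummable : Summable (fun n => a (n + 1)))
    (hsum : ∑' n, a (n + 1) = 1)
    (ht : ∀ n, t n = ∑' k, a (n + k))
    (hL0 : L 0 = 0)
    (hL : ∀ n ≥ 1, ∀ y ∈ Set.Ioc (t (n + 1)) (t n), L y = (t n - y) / a n)
    (hθ0 : θ 0 = 0)
    (hθinf : ∀ x ∈ Set.Ioc (0 : ℝ) 1, ∀ ℓ : ℕ → ℕ,
      (∀ j, 1 ≤ ℓ j ∧ L^[j] x ∈ Set.Ioc (t (ℓ j + 1)) (t (ℓ j))) →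
      θ x = -2 * ∑' k : ℕ, (-1 : ℝ) ^ (k + 1) *
        ((2 : ℝ)⁻¹) ^ (∑ i ∈ Finset.range (k + 1), ℓ i))
    (hθfin : ∀ x ∈ Set.Ioc (0 : ℝ) 1, ∀ m : ℕ, ∀ ℓ : ℕ → ℕ,
      (∀ j < m, 1 ≤ ℓ j ∧ L^[j] x ∈ Set.Ioc (t (ℓ j + 1)) (t (ℓ j))) →
      L^[m] x = 0 →
      θ x = -2 * ∑ k ∈ Finset.range m, (-1 : ℝ) ^ (k + 1) *
        ((2 : ℝ)⁻¹) ^ (∑ i ∈ Finset.range (k + 1), ℓ i))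
    (hκ : κplus = ⨅ n : ℕ,
      (-(((n : ℝ) + 1) * Real.log 2) / Real.log (a (n + 1)))) :
    (0 < κplus → ∃ c > (0 : ℝ), ∀ x ∈ Set.Icc (0 : ℝ) 1, ∀ y ∈ Set.Icc (0 : ℝ) 1,
      |θ x - θ y| ≤ c * |x - y| ^ κplus) ∧
    (κplus = 0 → ∀ s : ℝ, 0 < s →
      ¬ ∃ c > (0 : ℝ), ∀ x ∈ Set.Icc (0 : ℝ) 1, ∀ y ∈ Set.Icc (0 : ℝ) 1,
        |θ x - θ y| ≤ c * |x - y| ^ s) :=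
  stmt12_general a t L θ κplus hpos hsummable hsum ht hL hθ0 hθinf hθfin hκ
end

section
/- For the harmonic partition a_n = 1/(n(n+1)), the Lebesgue measure of the n-th sum-level set of the alternating Lüroth map satisfies λ(𝓛_n^{(α_H)}) ∼ 1/log n as n → ∞; in particular the first values are w_0 = 1, w_1 = 1/2, w_2 = 5/12, w_3 = 3/8, w_4 = 251/720. -/
open Filter Finset

noncomputable def Rf : ℕ → ℝ → ℝ
  | 0 => fun _ => 1
  | (n+1) => fun s => Rf n s * (s + n) / (n + 1)

noncomputable def Rd : ℕ → ℝ → ℝ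
  | 0 => fun _ => 0
  | (n+1) => fun s => (Rd n s * (s + n) + Rf n s) / (n + 1)

lemma Rf_succ (n : ℕ) (s : ℝ) : Rf (n+1) s = Rf n s * (s + n) / (n + 1) := rfl
lemma Rd_succ (n : ℕ) (s : ℝ) : Rd (n+1) s = (Rd n s * (s + n) + Rf n s) / (n + 1) := rfl

noncomputable def cf (n k : ℕ) : ℝ := 1 / (((n:ℝ)-k) * ((n:ℝ)-k+1))

noncomputable def Lf (n : ℕ) (s : ℝ) : ℝ := ∑ k ∈ Finset.range n, cf n k * Rf k s

lemma step1 (n : ℕ) (s : ℝ) :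
    ((n:ℝ)+2) * Lf (n+1) s = ((n:ℝ)+s) * Lf n s + Rf n s := by
  have hA : ((n:ℝ)+2) * Lf (n+1) s
      = (∑ k ∈ range (n+1), (1/((n:ℝ)+1-k)) * Rf k s)
        + ∑ k ∈ range (n+1), (k:ℝ) * (cf (n+1) k * Rf k s) := by
    rw [Lf, Finset.mul_sum, ← Finset.sum_add_distrib]
    refine Finset.sum_congr rfl fun k hk => ?_
    have hk' : k ≤ n := Nat.lt_succ_iff.mp (Finset.mem_range.mp hk)
    have hx : (0:ℝ) ≤ (n:ℝ) - k := by
      have := Nat.cast_le (α := ℝ) |>.mpr hk'; linarith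
    have h1 : ((n:ℝ) - k + 1) ≠ 0 := by linarith
    have h2 : ((n:ℝ) - k + 2) ≠ 0 := by linarith
    have hc : cf (n+1) k = 1 / ((((n:ℝ)-k)+1) * (((n:ℝ)-k)+2)) := by
      rw [cf]; push_cast; ring_nf
    rw [hc]
    have : ((n:ℝ)+1-k) = ((n:ℝ)-k)+1 := by ring
    rw [this]
    field_simp
    ring
  have hB : ((n:ℝ)+s) * Lf n s
      = (∑ k ∈ range n, (1/((n:ℝ)+1-k)) * Rf k s)
        + ∑ k ∈ range n, ((k:ℝ)+1) * (cf n k * Rf (k+1) s) := by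
    rw [Lf, Finset.mul_sum, ← Finset.sum_add_distrib]
    refine Finset.sum_congr rfl fun k hk => ?_
    have hk' : k < n := Finset.mem_range.mp hk
    have hx : (1:ℝ) ≤ (n:ℝ) - k := by
      have := Nat.cast_le (α := ℝ) |>.mpr (Nat.succ_le_of_lt hk'); push_cast at this; linarith
    have h0 : ((n:ℝ) - k) ≠ 0 := by linarith
    have h1 : ((n:ℝ) - k + 1) ≠ 0 := by linarith
    have hr : ((k:ℝ)+1) * Rf (k+1) s = (s + k) * Rf k s := by
      rw [Rf_succ]
      field_simp
    have : ((k:ℝ)+1) * (cf n k * Rf (k+1) s) = cf n k * (((k:ℝ)+1) * Rf (k+1) s) := by ring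
    rw [this, hr, cf]
    have h2 : ((n:ℝ)+1-k) = ((n:ℝ)-k)+1 := by ring
    rw [h2]
    field_simp
    ring
  have hC : ∑ k ∈ range (n+1), (k:ℝ) * (cf (n+1) k * Rf k s)
      = ∑ k ∈ range n, ((k:ℝ)+1) * (cf n k * Rf (k+1) s) := by
    rw [Finset.sum_range_succ']
    simp only [Nat.cast_zero, zero_mul, add_zero]
    refine Finset.sum_congr rfl fun k _ => ?_
    have hc : cf (n+1) (k+1) = cf n k := by rw [cf, cf]; push_cast; ring_nf
    rw [hc]; push_cast; ring
  rw [hA, hC, hB, Finset.sum_range_succ]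
  have : ((n:ℝ)+1-n) = 1 := by ring
  rw [this]
  ring

lemma main_id (n : ℕ) (hn : 1 ≤ n) (s : ℝ) :
    Lf n s = Rf n s + (1/((n:ℝ)+1)) * ((1-s) * Rd n s - Rf n s) := by
  induction n with
  | zero => omega
  | succ n ih =>
    rcases Nat.eq_or_lt_of_le hn with h1 | h1
    · -- n + 1 = 1
      have hn0 : n = 0 := by omega
      subst hn0
      show Lf 1 s = _
      rw [Lf]
      simp [cf, Rf, Rd]
      ring
    · have hn' : 1 ≤ n := by omega
      have hs := step1 n s
      have hLf : Lf (n+1) s = (((n:ℝ)+s) * Lf n s + Rf n s) / ((n:ℝ)+2) := by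
        field_simp at hs ⊢
        linarith
      rw [hLf, ih hn', Rf_succ, Rd_succ]
      have h1 : ((n:ℝ)+1) ≠ 0 := by positivity
      have h2 : ((n:ℝ)+2) ≠ 0 := by positivity
      push_cast
      field_simp
      ring

lemma hasDerivAt_Rf (n : ℕ) (s : ℝ) : HasDerivAt (Rf n) (Rd n s) s := by
  induction n with
  | zero => simpa [Rf, Rd] using hasDerivAt_const s (1:ℝ)
  | succ n ih =>
    have h1 : HasDerivAt (fun s : ℝ => s + (n:ℝ)) 1 s := (hasDerivAt_id s).add_const _
    have h3 := (ih.mul h1).div_const ((n:ℝ)+1)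
    simpa [Rf, Rd, mul_one] using h3

lemma Rf_cont (n : ℕ) : Continuous (Rf n) :=
  continuous_iff_continuousAt.2 fun s => (hasDerivAt_Rf n s).continuousAt

lemma Rd_cont (n : ℕ) : Continuous (Rd n) := by
  induction n with
  | zero => exact continuous_const
  | succ n ih =>
    show Continuous fun s => (Rd n s * (s + n) + Rf n s) / (n + 1)
    exact ((ih.mul (continuous_id.add continuous_const)).add (Rf_cont n)).div_const _

noncomputable def Wf (n : ℕ) : ℝ := ∫ s in (0:ℝ)..1, Rf n s

lemma Rf_zero_at_zero (n : ℕ) (hn : 1 ≤ n) : Rf n 0 = 0 := by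
  induction n with
  | zero => omega
  | succ n ih =>
    rcases Nat.eq_zero_or_pos n with h | h
    · subst h; simp [Rf]
    · rw [Rf_succ, ih h, zero_mul, zero_div]

lemma integral_Dn (n : ℕ) (hn : 1 ≤ n) :
    (∫ s in (0:ℝ)..1, ((1-s) * Rd n s - Rf n s)) = 0 := by
  have key : ∀ s : ℝ, HasDerivAt (fun s : ℝ => (1-s) * Rf n s) ((1-s) * Rd n s - Rf n s) s := by
    intro s
    have h1 : HasDerivAt (fun s : ℝ => 1-s) (-1) s := (hasDerivAt_id s).const_sub 1
    have : HasDerivAt (fun s : ℝ => (1-s) * Rf n s) _ s := h1.mul (hasDerivAt_Rf n s)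
    convert this using 1
    ring
  have hcont : Continuous fun s : ℝ => (1-s) * Rd n s - Rf n s :=
    ((continuous_const.sub continuous_id).mul (Rd_cont n)).sub (Rf_cont n)
  rw [intervalIntegral.integral_eq_sub_of_hasDerivAt (fun s _ => key s)
    (hcont.intervalIntegrable 0 1)]
  simp [Rf_zero_at_zero n hn]

lemma Wf_rec (n : ℕ) (hn : 1 ≤ n) : Wf n = ∑ k ∈ Finset.range n, cf n k * Wf k := by
  have h1 : ∑ k ∈ Finset.range n, cf n k * Wf k = ∫ s in (0:ℝ)..1, Lf n s := by
    simp only [Lf]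
    rw [intervalIntegral.integral_finset_sum]
    · exact Finset.sum_congr rfl fun k _ => by
        rw [intervalIntegral.integral_const_mul, Wf]
    · exact fun k _ => ((continuous_const.mul (Rf_cont k)).intervalIntegrable 0 1)
  rw [h1]
  have h2 : (∫ s in (0:ℝ)..1, Lf n s)
      = ∫ s in (0:ℝ)..1, (Rf n s + (1/((n:ℝ)+1)) * ((1-s) * Rd n s - Rf n s)) :=
    intervalIntegral.integral_congr fun s _ => main_id n hn s
  have h3 : (∫ s in (0:ℝ)..1, (Rf n s + (1/((n:ℝ)+1)) * ((1-s) * Rd n s - Rf n s)))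
      = (∫ s in (0:ℝ)..1, Rf n s)
        + ∫ s in (0:ℝ)..1, (1/((n:ℝ)+1)) * ((1-s) * Rd n s - Rf n s) :=
    intervalIntegral.integral_add ((Rf_cont n).intervalIntegrable 0 1)
      ((continuous_const.mul (((continuous_const.sub continuous_id).mul (Rd_cont n)).sub (Rf_cont n))).intervalIntegrable 0 1)
  rw [h2, h3, intervalIntegral.integral_const_mul, integral_Dn n hn, mul_zero, add_zero, Wf]

lemma Wf_zero : Wf 0 = 1 := by simp [Wf, Rf]

lemma w_eq_Wf (a w : ℕ → ℝ)
    (ha : ∀ n ≥ 1, a n = 1 / ((n : ℝ) * ((n : ℝ) + 1)))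
    (hw0 : w 0 = 1)
    (hw : ∀ n ≥ 1, w n = ∑ m ∈ Finset.Icc 1 n, a m * w (n - m)) :
    ∀ n, w n = Wf n := by
  intro n
  induction n using Nat.strong_induction_on with
  | _ n ih =>
    rcases Nat.eq_zero_or_pos n with h | h
    · subst h; rw [hw0, Wf_zero]
    · rw [hw n h, Wf_rec n h]
      refine Finset.sum_nbij' (i := fun m => n - m) (j := fun k => n - k)
        ?_ ?_ ?_ ?_ ?_
      · intro m hm
        rw [Finset.mem_Icc] at hm
        rw [Finset.mem_range]
        omega
      · intro k hk
        rw [Finset.mem_range] at hk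
        rw [Finset.mem_Icc]
        omega
      · intro m hm
        rw [Finset.mem_Icc] at hm
        omega
      · intro k hk
        rw [Finset.mem_range] at hk
        omega
      · intro m hm
        rw [Finset.mem_Icc] at hm
        have h1 : n - m < n := by omega
        have hcast : ((n - m : ℕ) : ℝ) = (n : ℝ) - (m : ℝ) := by
          push_cast [Nat.cast_sub hm.2]; ring
        have hcf : cf n (n - m) = a m := by
          rw [cf, hcast, ha m hm.1]
          norm_num
        rw [ih _ h1, hcf]

noncomputable def H (n : ℕ) : ℝ := ∑ i ∈ Finset.range n, ((i:ℝ)+1)⁻¹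

lemma H_succ (n : ℕ) : H (n+1) = H n + ((n:ℝ)+1)⁻¹ := Finset.sum_range_succ _ n

lemma H_eq (n : ℕ) : H n = (harmonic n : ℝ) := by
  rw [H, harmonic]
  push_cast
  rfl

lemma H_ge (n : ℕ) : Real.log (n+1) ≤ H n := by
  rw [H_eq]
  exact_mod_cast log_add_one_le_harmonic n

lemma H_le (n : ℕ) : H n ≤ 1 + Real.log n := by
  rw [H_eq]; exact harmonic_le_one_add_log n

lemma Rf_nonneg (n : ℕ) {s : ℝ} (hs : 0 ≤ s) : 0 ≤ Rf n s := by
  induction n with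
  | zero => exact zero_le_one
  | succ n ih =>
    rw [Rf_succ]
    have : (0:ℝ) ≤ s + n := by positivity
    positivity

lemma Rf_upper (n : ℕ) {s : ℝ} (h0 : 0 ≤ s) (h1 : s ≤ 1) :
    Rf n s ≤ Real.exp (-(1-s) * H n) := by
  induction n with
  | zero => simp [Rf, H]
  | succ n ih =>
    rw [Rf_succ, H_succ]
    have hfac : (s + n) / ((n:ℝ) + 1) ≤ Real.exp (-(1-s) * ((n:ℝ)+1)⁻¹) := by
      have heq : (s + n) / ((n:ℝ) + 1) = 1 + (-(1-s) * ((n:ℝ)+1)⁻¹) := by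
        field_simp
        ring
      rw [heq]
      linarith [Real.add_one_le_exp (-(1-s) * ((n:ℝ)+1)⁻¹)]
    have hfacnn : 0 ≤ (s + n) / ((n:ℝ) + 1) := by positivity
    calc Rf n s * (s + n) / ((n:ℝ) + 1) = Rf n s * ((s + n) / ((n:ℝ) + 1)) := by ring
      _ ≤ Real.exp (-(1-s) * H n) * Real.exp (-(1-s) * ((n:ℝ)+1)⁻¹) :=
          mul_le_mul ih hfac hfacnn (Real.exp_nonneg _)
      _ = Real.exp (-(1-s) * (H n + ((n:ℝ)+1)⁻¹)) := by
          rw [← Real.exp_add]; ring_nf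

lemma aux_exp {x : ℝ} (h0 : 0 ≤ x) (h2 : x ≤ 1/2) : Real.exp (-(x + 2*x^2)) ≤ 1 - x := by
  have hx : 0 < 1 - x := by linarith
  rw [← Real.exp_log hx, Real.exp_le_exp]
  have h3 : Real.log (1-x)⁻¹ ≤ (1-x)⁻¹ - 1 := Real.log_le_sub_one_of_pos (by positivity)
  rw [Real.log_inv] at h3
  have h4 : (1-x)⁻¹ - 1 = x / (1-x) := by field_simp; ring
  rw [h4] at h3
  have h5 : x / (1-x) ≤ x + 2*x^2 := by
    rw [div_le_iff₀ hx]
    nlinarith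
  linarith

lemma Rf_lower (n : ℕ) (hn : 1 ≤ n) {s : ℝ} (h0 : 0 ≤ s) (h1 : s ≤ 1) :
    s * Real.exp (-((1-s) * (H n - 1) + 2*(1-s)^2 * (1 - 1/(n:ℝ)))) ≤ Rf n s := by
  induction n with
  | zero => omega
  | succ n ih =>
    rcases Nat.eq_zero_or_pos n with h | h
    · subst h
      have : Rf 1 s = s := by rw [Rf_succ]; simp [Rf]
      rw [this]
      have hH1 : H 1 = 1 := by simp [H]
      rw [hH1]
      norm_num
    · have hstep := ih h
      rw [Rf_succ]
      push_cast
      set x : ℝ := (1-s)/((n:ℝ)+1) with hxdef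
      have hx0 : 0 ≤ x := by
        have : (0:ℝ) < (n:ℝ)+1 := by positivity
        apply div_nonneg <;> linarith
      have hx2 : x ≤ 1/2 := by
        rw [hxdef, div_le_iff₀ (by positivity)]
        have : (1:ℝ) ≤ n := by exact_mod_cast h
        linarith
      have hfac : (s + n) / ((n:ℝ) + 1) = 1 - x := by
        rw [hxdef]; field_simp; ring
      have hexp := aux_exp hx0 hx2
      have hRnn := Rf_nonneg n h0
      have hEn : (1-s) * (H (n+1) - 1) + 2*(1-s)^2 * (1 - 1/((n:ℝ)+1))
          ≥ ((1-s) * (H n - 1) + 2*(1-s)^2 * (1 - 1/(n:ℝ))) + (x + 2*x^2) := by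
        rw [H_succ, hxdef]
        have hn1 : (1:ℝ) ≤ (n:ℝ) := by exact_mod_cast h
        have e1 : (1-s) * (H n + ((n:ℝ)+1)⁻¹ - 1) =
            (1-s) * (H n - 1) + (1-s)/((n:ℝ)+1) := by field_simp; ring
        rw [e1]
        have e2 : ((1-s)/((n:ℝ)+1))^2 ≤ (1-s)^2 * (1/((n:ℝ)*((n:ℝ)+1))) := by
          rw [div_pow, mul_one_div]
          exact div_le_div_of_nonneg_left (sq_nonneg _)
            (mul_pos (by linarith) (by linarith)) (by nlinarith)
        have e3 : 2*(1-s)^2 * (1 - 1/((n:ℝ)+1)) =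
            2*(1-s)^2 * (1 - 1/(n:ℝ)) + 2*(1-s)^2 * (1/((n:ℝ)*((n:ℝ)+1))) := by
          have hnne : (n:ℝ) ≠ 0 := by positivity
          field_simp
          ring
        rw [e3]
        nlinarith [e2]
      calc s * Real.exp (-((1-s) * (H (n+1) - 1) + 2*(1-s)^2 * (1 - 1/((n:ℝ)+1))))
          ≤ s * (Real.exp (-((1-s) * (H n - 1) + 2*(1-s)^2 * (1 - 1/(n:ℝ)))) * Real.exp (-(x + 2*x^2))) := by
            rw [← Real.exp_add]
            apply mul_le_mul_of_nonneg_left _ h0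
            rw [Real.exp_le_exp]
            linarith
        _ = (s * Real.exp (-((1-s) * (H n - 1) + 2*(1-s)^2 * (1 - 1/(n:ℝ))))) * Real.exp (-(x + 2*x^2)) := by ring
        _ ≤ Rf n s * (1 - x) := by
            apply mul_le_mul hstep hexp (Real.exp_nonneg _) hRnn
        _ = Rf n s * (s + n) / ((n:ℝ)+1) := by rw [mul_comm (Rf n s) _, ← hfac]; ring

lemma H_ge_one (n : ℕ) (hn : 1 ≤ n) : 1 ≤ H n := by
  have h0 : (0:ℕ) ∈ Finset.range n := Finset.mem_range.mpr hn
  have := Finset.single_le_sum (f := fun i : ℕ => ((i:ℝ)+1)⁻¹)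
    (fun i _ => by positivity) h0
  simpa [H] using this

lemma integral_exp_lin {c : ℝ} (hc : c ≠ 0) (u v : ℝ) :
    (∫ s in u..v, Real.exp (-(1-s)*c))
      = (Real.exp (-(1-v)*c) - Real.exp (-(1-u)*c))/c := by
  have key : ∀ s : ℝ, HasDerivAt (fun s : ℝ => Real.exp (-(1-s)*c)/c)
      (Real.exp (-(1-s)*c)) s := by
    intro s
    have h1 : HasDerivAt (fun s : ℝ => -(1-s)*c) c s := by
      have := (((hasDerivAt_id s).const_sub 1).neg.mul_const c)
      simpa using this
    have h2 := (Real.hasDerivAt_exp (-(1-s)*c)).comp s h1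
    have h3 := h2.div_const c
    simpa [mul_div_assoc, mul_div_cancel_right₀ _ hc] using h3
  have hcont : Continuous fun s : ℝ => Real.exp (-(1-s)*c) := by continuity
  rw [intervalIntegral.integral_eq_sub_of_hasDerivAt (fun s _ => key s)
    (hcont.intervalIntegrable u v)]
  ring

lemma Wf_upper (n : ℕ) (hn : 1 ≤ n) : Wf n ≤ 1 / H n := by
  have hH : (0:ℝ) < H n := lt_of_lt_of_le one_pos (H_ge_one n hn)
  have h1 : Wf n ≤ ∫ s in (0:ℝ)..1, Real.exp (-(1-s) * H n) := by
    apply intervalIntegral.integral_mono_on zero_le_one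
      ((Rf_cont n).intervalIntegrable 0 1)
      ((by continuity : Continuous fun s : ℝ => Real.exp (-(1-s) * H n)).intervalIntegrable 0 1)
    intro s hs
    exact Rf_upper n hs.1 hs.2
  rw [integral_exp_lin (ne_of_gt hH) 0 1] at h1
  have h2 : (Real.exp (-(1-1) * H n) - Real.exp (-(1-0) * H n)) / H n ≤ 1 / H n := by
    have e0 : -(1-(1:ℝ)) * H n = 0 := by ring
    have hnum : Real.exp (-(1-(1:ℝ)) * H n) - Real.exp (-(1-(0:ℝ)) * H n) ≤ 1 := by
      rw [e0, Real.exp_zero]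
      linarith [Real.exp_pos (-(1-(0:ℝ)) * H n)]
    exact (div_le_div_iff_of_pos_right hH).mpr hnum
  exact h1.trans h2


lemma Wf_lower (n : ℕ) (hn : 1 ≤ n) {δ : ℝ} (hδ0 : 0 < δ) (hδ1 : δ ≤ 1)
    (hh : 0 < H n - 1) :
    (1-δ) * Real.exp (-2*δ^2) * ((1 - Real.exp (-(δ*(H n - 1)))) / (H n - 1)) ≤ Wf n := by
  set h : ℝ := H n - 1 with hhdef
  have hint1 : IntervalIntegrable (Rf n) MeasureTheory.volume 0 (1-δ) :=
    (Rf_cont n).intervalIntegrable _ _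
  have hint2 : IntervalIntegrable (Rf n) MeasureTheory.volume (1-δ) 1 :=
    (Rf_cont n).intervalIntegrable _ _
  have hsplit : Wf n = (∫ s in (0:ℝ)..(1-δ), Rf n s) + ∫ s in (1-δ:ℝ)..1, Rf n s := by
    rw [Wf, intervalIntegral.integral_add_adjacent_intervals hint1 hint2]
  have hnn : 0 ≤ ∫ s in (0:ℝ)..(1-δ), Rf n s := by
    apply intervalIntegral.integral_nonneg (by linarith)
    intro u hu
    exact Rf_nonneg n hu.1
  have hmono : (∫ s in (1-δ:ℝ)..1, (1-δ) * Real.exp (-2*δ^2) * Real.exp (-(1-s)*h))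
      ≤ ∫ s in (1-δ:ℝ)..1, Rf n s := by
    apply intervalIntegral.integral_mono_on (by linarith)
      ((by continuity : Continuous fun s : ℝ => (1-δ) * Real.exp (-2*δ^2) * Real.exp (-(1-s)*h)).intervalIntegrable _ _)
      ((Rf_cont n).intervalIntegrable _ _)
    intro s hs
    have hs0 : 0 ≤ s := by linarith [hs.1]
    have hs1 : s ≤ 1 := hs.2
    have hlow := Rf_lower n hn hs0 hs1
    have hE : (1-s) * h + 2*δ^2 ≥ (1-s) * (H n - 1) + 2*(1-s)^2 * (1 - 1/(n:ℝ)) := by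
      rw [hhdef]
      have h1s : 0 ≤ 1 - s := by linarith
      have h1sδ : 1 - s ≤ δ := by linarith [hs.1]
      have hq : (1-s)^2 ≤ δ^2 := by nlinarith
      have hr : (0:ℝ) ≤ 1 - 1/(n:ℝ) := by
        have : (1:ℝ) ≤ (n:ℝ) := by exact_mod_cast hn
        have : 1/(n:ℝ) ≤ 1 := by
          rw [div_le_one (by linarith)]; linarith
        linarith
      have hr2 : 1 - 1/(n:ℝ) ≤ 1 := by
        have : (0:ℝ) < (n:ℝ) := by exact_mod_cast hn
        have : 0 < 1/(n:ℝ) := by positivity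
        linarith
      nlinarith
    calc (1-δ) * Real.exp (-2*δ^2) * Real.exp (-(1-s)*h)
        = (1-δ) * Real.exp (-((1-s)*h + 2*δ^2)) := by
          rw [mul_assoc, ← Real.exp_add]
          congr 2
          ring
      _ ≤ s * Real.exp (-((1-s) * (H n - 1) + 2*(1-s)^2 * (1 - 1/(n:ℝ)))) := by
          apply mul_le_mul (by linarith [hs.1]) ?_ (Real.exp_nonneg _) hs0
          rw [Real.exp_le_exp]
          linarith
      _ ≤ Rf n s := hlow
  have hval : (∫ s in (1-δ:ℝ)..1, (1-δ) * Real.exp (-2*δ^2) * Real.exp (-(1-s)*h))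
      = (1-δ) * Real.exp (-2*δ^2) * ((1 - Real.exp (-(δ*h))) / h) := by
    rw [intervalIntegral.integral_const_mul, integral_exp_lin (ne_of_gt hh) (1-δ) 1]
    have e1 : -(1-(1:ℝ)) * h = 0 := by ring
    have e2 : -(1-(1-δ)) * h = -(δ*h) := by ring
    rw [e1, e2, Real.exp_zero]
  rw [hsplit, ← hval]
  linarith

lemma sqrt_tendsto_atTop : Tendsto Real.sqrt atTop atTop := by
  rw [tendsto_atTop]
  intro b
  filter_upwards [eventually_ge_atTop (b^2)] with x hx
  calc b ≤ |b| := le_abs_self b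
    _ = Real.sqrt (b^2) := (Real.sqrt_sq_eq_abs b).symm
    _ ≤ Real.sqrt x := Real.sqrt_le_sqrt hx

lemma Wf_tendsto : Tendsto (fun n : ℕ => Wf n * Real.log n) atTop (nhds 1) := by
  have hlogtop : Tendsto (fun n : ℕ => Real.log ((n:ℝ)+1)) atTop atTop :=
    Real.tendsto_log_atTop.comp (tendsto_atTop_add_const_right _ 1 tendsto_natCast_atTop_atTop)
  have hHtop : Tendsto (fun n : ℕ => H n - 1) atTop atTop := by
    apply tendsto_atTop_mono (fun n => ?_)
      (tendsto_atTop_add_const_right _ (-1) hlogtop)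
    have := H_ge n
    linarith
  have hsq : Tendsto (fun n : ℕ => Real.sqrt (H n - 1)) atTop atTop :=
    sqrt_tendsto_atTop.comp hHtop
  set d : ℕ → ℝ := fun n => (Real.sqrt (H n - 1))⁻¹ with hd
  have hdto : Tendsto d atTop (nhds 0) := Tendsto.inv_tendsto_atTop hsq
  set g : ℕ → ℝ := fun n =>
    (1 - d n) * Real.exp (-2*(d n)^2) * (1 - Real.exp (-Real.sqrt (H n - 1))) with hg_def
  have hg : Tendsto g atTop (nhds 1) := by
    have t1 : Tendsto (fun n => 1 - d n) atTop (nhds 1) := by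
      simpa using tendsto_const_nhds.sub hdto
    have t2 : Tendsto (fun n => Real.exp (-2*(d n)^2)) atTop (nhds 1) := by
      have h00 : Tendsto (fun n => (d n)^2) atTop (nhds 0) := by
        have := hdto.mul hdto
        simp only [mul_zero] at this
        exact this.congr (fun n => (sq (d n)).symm)
      have h0 : Tendsto (fun n => -2*(d n)^2) atTop (nhds 0) := by
        have := h00.const_mul (-2 : ℝ)
        simpa using this
      have := (Real.continuous_exp.continuousAt (x := (0:ℝ))).tendsto.comp h0
      simpa [Function.comp_def] using this
    have t3 : Tendsto (fun n => 1 - Real.exp (-Real.sqrt (H n - 1))) atTop (nhds 1) := by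
      have h0 : Tendsto (fun n : ℕ => Real.exp (-Real.sqrt (H n - 1))) atTop (nhds 0) :=
        Real.tendsto_exp_neg_atTop_nhds_zero.comp hsq
      simpa using tendsto_const_nhds.sub h0
    rw [hg_def]
    convert (t1.mul t2).mul t3 using 2
    norm_num
  apply tendsto_of_tendsto_of_tendsto_of_le_of_le' hg tendsto_const_nhds
  · -- g n ≤ Wf n * log n eventually
    filter_upwards [eventually_ge_atTop 1, hHtop.eventually_ge_atTop 1] with n hn hhn
    have hh0 : (0:ℝ) < H n - 1 := by linarith
    have hsq1 : 1 ≤ Real.sqrt (H n - 1) := by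
      have h := Real.sqrt_le_sqrt hhn
      rwa [Real.sqrt_one] at h
    have hsqpos : (0:ℝ) < Real.sqrt (H n - 1) := by linarith
    have hd0 : 0 < d n := by
      simp only [hd]
      exact inv_pos.mpr hsqpos
    have hd1 : d n ≤ 1 := by
      simp only [hd]
      exact inv_le_one_of_one_le₀ hsq1
    have hmul : d n * (H n - 1) = Real.sqrt (H n - 1) := by
      simp only [hd]
      rw [inv_mul_eq_div, div_eq_iff (ne_of_gt hsqpos)]
      exact (Real.mul_self_sqrt (le_of_lt hh0)).symm
    have hlow := Wf_lower n hn hd0 hd1 hh0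
    rw [hmul] at hlow
    set B : ℝ := (1 - d n) * Real.exp (-2*(d n)^2) with hB
    set E : ℝ := 1 - Real.exp (-Real.sqrt (H n - 1)) with hE
    have hBnn : 0 ≤ B := mul_nonneg (by linarith) (Real.exp_nonneg _)
    have hEnn : 0 ≤ E := by
      have h := Real.exp_le_exp.mpr (show -Real.sqrt (H n - 1) ≤ 0 by linarith)
      rw [Real.exp_zero] at h
      simp only [hE]
      linarith
    have hlogh : H n - 1 ≤ Real.log n := by linarith [H_le n]
    have hgn : g n = B * E := by
      simp only [hg_def, hB, hE]
    have hlow' : B * (E / (H n - 1)) ≤ Wf n := hlow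
    have hlog0 : 0 ≤ Real.log n := by linarith
    calc g n = (B * E) * 1 := by rw [hgn]; ring
      _ ≤ (B * E) * (Real.log n / (H n - 1)) := by
          apply mul_le_mul_of_nonneg_left _ (mul_nonneg hBnn hEnn)
          exact (one_le_div hh0).mpr hlogh
      _ = (B * (E / (H n - 1))) * Real.log n := by ring
      _ ≤ Wf n * Real.log n := mul_le_mul_of_nonneg_right hlow' hlog0
  · -- Wf n * log n ≤ 1 eventually
    filter_upwards [eventually_ge_atTop 1] with n hn
    have hH1 : 1 ≤ H n := H_ge_one n hn
    have hn1 : (1:ℝ) ≤ (n:ℝ) := by exact_mod_cast hn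
    have hlog0 : 0 ≤ Real.log n := Real.log_nonneg hn1
    have h1 := Wf_upper n hn
    have h2 : Real.log n ≤ H n := by
      have : Real.log n ≤ Real.log ((n:ℝ)+1) := by
        apply Real.log_le_log (by linarith) (by linarith)
      linarith [H_ge n]
    calc Wf n * Real.log n ≤ (1/H n) * Real.log n := mul_le_mul_of_nonneg_right h1 hlog0
      _ ≤ 1 := by
          rw [one_div, inv_mul_eq_div, div_le_one (by linarith)]
          exact h2


/-- For the harmonic partition `a_n = 1/(n(n+1))`, the measures of the sum-level sets of
the alternating Lüroth map satisfy `w_n ∼ 1/log n`, with initial values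
`w₁ = 1/2, w₂ = 5/12, w₃ = 3/8, w₄ = 251/720`. -/
theorem stmt18 (a w : ℕ → ℝ)
    (ha : ∀ n ≥ 1, a n = 1 / ((n : ℝ) * ((n : ℝ) + 1)))
    (hw0 : w 0 = 1)
    (hw : ∀ n ≥ 1, w n = ∑ m ∈ Finset.Icc 1 n, a m * w (n - m)) :
    Tendsto (fun n : ℕ => w n * Real.log n) atTop (nhds 1) ∧
    w 1 = 1 / 2 ∧ w 2 = 5 / 12 ∧ w 3 = 3 / 8 ∧ w 4 = 251 / 720 := by
  have ha1 : a 1 = 1/2 := by rw [ha 1 le_rfl]; norm_num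
  have ha2 : a 2 = 1/6 := by rw [ha 2 (by norm_num)]; norm_num
  have ha3 : a 3 = 1/12 := by rw [ha 3 (by norm_num)]; norm_num
  have ha4 : a 4 = 1/20 := by rw [ha 4 (by norm_num)]; norm_num
  have h1 : w 1 = 1/2 := by
    rw [hw 1 le_rfl, show Finset.Icc 1 1 = {1} from Finset.Icc_self 1, Finset.sum_singleton]
    norm_num [ha1, hw0]
  have h2 : w 2 = 5/12 := by
    rw [hw 2 (by norm_num), show Finset.Icc 1 2 = {1, 2} by decide]
    rw [Finset.sum_insert (by decide), Finset.sum_singleton]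
    norm_num [ha1, ha2, hw0, h1]
  have h3 : w 3 = 3/8 := by
    rw [hw 3 (by norm_num), show Finset.Icc 1 3 = {1, 2, 3} by decide]
    rw [Finset.sum_insert (by decide), Finset.sum_insert (by decide), Finset.sum_singleton]
    norm_num [ha1, ha2, ha3, hw0, h1, h2]
  have h4 : w 4 = 251/720 := by
    rw [hw 4 (by norm_num), show Finset.Icc 1 4 = {1, 2, 3, 4} by decide]
    rw [Finset.sum_insert (by decide), Finset.sum_insert (by decide),
      Finset.sum_insert (by decide), Finset.sum_singleton]
    norm_num [ha1, ha2, ha3, ha4, hw0, h1, h2, h3]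
  refine ⟨?_, h1, h2, h3, h4⟩
  have hwW := w_eq_Wf a w ha hw0 hw
  have hfun : (fun n : ℕ => w n * Real.log n) = fun n : ℕ => Wf n * Real.log n :=
    funext fun n => by rw [hwW n]
  rw [hfun]
  exact Wf_tendsto
end
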